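/- arXiv:2502.16522 — 5 statements merged into one kernel-verified Lean document; each statement's English description precedes it below -/
import Mathlib

section
/- Let I be an unbounded open interval and G : I → ℝ measurable with |G(t₁) - G(t₂)| ≤ C(1 + |t₁ - t₂|) for all t₁, t₂ ∈ I. If A : I → ℝ is Lipschitz (with essentially bounded derivative A') and A - G is bounded on I, then liminf_{t→+∞} inf_{s, s+t ∈ I} (G(s+t) - G(s))/t ≥ essinf_I A'. -/
open Filter MeasureTheory Set

/-- If `I` is an unbounded open interval, `G : I → ℝ` is measurable with sublinear
increments, `A` is Lipschitz on `I` with (essentially) bounded derivative `A'` and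
`A - G` is bounded on `I`, then
`liminf_{t→+∞} inf_{s, s+t ∈ I} (G(s+t) - G(s))/t ≥ essinf_I A'`. -/
theorem liminf_growth_rate_ge_essInf
    (I : Set ℝ) (hIopen : IsOpen I) (hIconn : I.OrdConnected)
    (hIne : I.Nonempty) (hIunbdd : ¬ Bornology.IsBounded I)
    (G : ℝ → ℝ) (hG : Measurable G) (C : ℝ) (hC : 0 < C)
    (hlin : ∀ t₁ ∈ I, ∀ t₂ ∈ I, |G t₁ - G t₂| ≤ C * (1 + |t₁ - t₂|))
    (A A' : ℝ → ℝ)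
    (hderiv : ∀ x ∈ I, HasDerivAt A (A' x) x)
    (hA'bdd : ∃ M : ℝ, ∀ x ∈ I, |A' x| ≤ M)
    (hAG : ∃ M : ℝ, ∀ x ∈ I, |A x - G x| ≤ M) :
    essInf A' (volume.restrict I) ≤
      liminf (fun t : ℝ =>
        sInf ((fun s => (G (s + t) - G s) / t) '' {s | s ∈ I ∧ s + t ∈ I})) atTop := by
  obtain ⟨M', hM'⟩ := hA'bdd
  obtain ⟨M, hM⟩ := hAG
  obtain ⟨x₀, hx₀⟩ := hIne
  have hImeas : MeasurableSet I := hIopen.measurableSet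
  set m := essInf A' (volume.restrict I) with hm
  -- a.e. lower bound by the essential infimum
  have hae : ∀ᵐ x ∂(volume.restrict I), m ≤ A' x := by
    apply ae_essInf_le
    refine ⟨-M', ?_⟩
    rw [Filter.eventually_map]
    filter_upwards [ae_restrict_mem hImeas] with x hx
    exact neg_le_of_abs_le (hM' x hx)
  -- nonemptiness of the translation set
  have hne : ∀ t : ℝ, 0 < t → {s | s ∈ I ∧ s + t ∈ I}.Nonempty := by
    intro t ht
    rw [isBounded_iff_bddBelow_bddAbove, not_and_or] at hIunbdd
    rcases hIunbdd with hb | hb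
    · obtain ⟨y, hy, hy'⟩ := not_bddBelow_iff.1 hb (x₀ - t)
      refine ⟨y, hy, ?_⟩
      exact hIconn.out hy hx₀ ⟨by linarith, by linarith⟩
    · obtain ⟨y, hy, hy'⟩ := not_bddAbove_iff.1 hb (x₀ + t)
      refine ⟨y - t, ?_, by simpa using hy⟩
      exact hIconn.out hx₀ hy ⟨by linarith, by linarith⟩
  -- elementwise lower bound
  have helem : ∀ t : ℝ, 0 < t → ∀ s ∈ I, s + t ∈ I →
      m - 2 * M / t ≤ (G (s + t) - G s) / t := by
    intro t ht s hs hst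
    have hsub : Icc s (s + t) ⊆ I := hIconn.out hs hst
    have hle : s ≤ s + t := by linarith
    -- interval integrability of A'
    have hint : IntervalIntegrable A' volume s (s + t) := by
      rw [intervalIntegrable_iff_integrableOn_Ioc_of_le hle]
      have hcongr : EqOn (deriv A) A' (Ioc s (s + t)) := fun x hx =>
        (hderiv x (hsub (Ioc_subset_Icc_self hx))).deriv
      refine IntegrableOn.congr_fun ?_ hcongr measurableSet_Ioc
      have hconst : IntegrableOn (fun _ : ℝ => M') (Ioc s (s + t)) volume :=
        integrableOn_const measure_Ioc_lt_top.ne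
      refine Integrable.mono' hconst
        ((measurable_deriv A).aestronglyMeasurable.restrict) ?_
      filter_upwards [ae_restrict_mem measurableSet_Ioc] with x hx
      rw [(hderiv x (hsub (Ioc_subset_Icc_self hx))).deriv, Real.norm_eq_abs]
      exact hM' x (hsub (Ioc_subset_Icc_self hx))
    have hFTC : ∫ u in s..(s + t), A' u = A (s + t) - A s := by
      apply intervalIntegral.integral_eq_sub_of_hasDerivAt _ hint
      intro x hx
      rw [uIcc_of_le hle] at hx
      exact hderiv x (hsub hx)
    have hmono : m * t ≤ A (s + t) - A s := by
      have h1 : (∫ _ in s..(s + t), m) ≤ ∫ u in s..(s + t), A' u := by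
        refine intervalIntegral.integral_mono_ae_restrict hle
          intervalIntegrable_const hint ?_
        exact ae_restrict_of_ae_restrict_of_subset hsub hae
      rw [hFTC] at h1
      simpa [mul_comm] using h1
    have hG1 : |A s - G s| ≤ M := hM s hs
    have hG2 : |A (s + t) - G (s + t)| ≤ M := hM (s + t) hst
    rw [abs_le] at hG1 hG2
    rw [le_div_iff₀ ht]
    have h2 : 2 * M / t * t = 2 * M := by field_simp
    nlinarith [h2]
  have hbdd : ∀ t : ℝ, 0 < t →
      BddBelow ((fun s => (G (s + t) - G s) / t) '' {s | s ∈ I ∧ s + t ∈ I}) := by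
    intro t ht
    refine ⟨m - 2 * M / t, ?_⟩
    rintro x ⟨s, ⟨hs, hst⟩, rfl⟩
    exact helem t ht s hs hst
  have key : ∀ t : ℝ, 0 < t →
      m - 2 * M / t ≤
        sInf ((fun s => (G (s + t) - G s) / t) '' {s | s ∈ I ∧ s + t ∈ I}) := by
    intro t ht
    refine le_csInf ((hne t ht).image _) ?_
    rintro x ⟨s, ⟨hs, hst⟩, rfl⟩
    exact helem t ht s hs hst
  -- pass to the liminf
  have htend : Tendsto (fun t : ℝ => m - 2 * M / t) atTop (nhds m) := by
    have h0 : Tendsto (fun t : ℝ => 2 * M / t) atTop (nhds 0) :=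
      Tendsto.div_atTop tendsto_const_nhds tendsto_id
    simpa using tendsto_const_nhds.sub h0
  have hliminf : liminf (fun t : ℝ => m - 2 * M / t) atTop = m := htend.liminf_eq
  rw [← hliminf]
  refine liminf_le_liminf ?_ htend.isBoundedUnder_ge ?_
  · filter_upwards [eventually_gt_atTop (0 : ℝ)] with t ht using key t ht
  · apply IsBoundedUnder.isCoboundedUnder_ge
    refine ⟨2 * C, ?_⟩
    rw [Filter.eventually_map]
    filter_upwards [eventually_ge_atTop (1 : ℝ)] with t ht1
    have ht : (0 : ℝ) < t := lt_of_lt_of_le one_pos ht1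
    obtain ⟨s, hs, hst⟩ := hne t ht
    refine le_trans (csInf_le (hbdd t ht) ⟨s, ⟨hs, hst⟩, rfl⟩) ?_
    have h3 := hlin (s + t) hst s hs
    rw [abs_le] at h3
    have h4 : |s + t - s| = t := by rw [show s + t - s = t by ring, abs_of_pos ht]
    rw [h4] at h3
    rw [div_le_iff₀ ht]
    nlinarith [h3.2]
end

section
/- Let G : (0,∞) → ℝ be measurable with |G(t₁) - G(t₂)| ≤ C(1 + |t₁ - t₂|) for all t₁, t₂ > 0. Then the least global growth-rate ⌊G⌋ := lim_{t→+∞} inf_{s≥0} (G(s+t) - G(s))/t equals the supremum of essinf A' over all functions A : (0,∞) → ℝ with A' ∈ L^∞ and A - G ∈ L^∞. -/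
open Filter MeasureTheory Set Pointwise

noncomputable def gfun (G : ℝ → ℝ) (t : ℝ) : ℝ :=
  sInf ((fun s => G (s + t) - G s) '' Ioi 0)

section Basic
variable {G : ℝ → ℝ} {C : ℝ} (hC : 0 < C)
  (hlin : ∀ t₁ ∈ Ioi (0:ℝ), ∀ t₂ ∈ Ioi (0:ℝ), |G t₁ - G t₂| ≤ C * (1 + |t₁ - t₂|))

include hC hlin

lemma incr_lb {t s : ℝ} (ht : 0 < t) (hs : 0 < s) :
    -(C * (1 + t)) ≤ G (s + t) - G s := by
  have h := hlin (s + t) (by simp [Set.mem_Ioi]; linarith) s (Set.mem_Ioi.2 hs)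
  have : |s + t - s| = t := by rw [add_sub_cancel_left, abs_of_pos ht]
  rw [this] at h
  have := neg_abs_le (G (s + t) - G s)
  linarith

lemma gfun_bddBelow {t : ℝ} (ht : 0 < t) :
    BddBelow ((fun s => G (s + t) - G s) '' Ioi 0) := by
  refine ⟨-(C * (1 + t)), ?_⟩
  rintro y ⟨s, hs, rfl⟩
  exact incr_lb hC hlin ht hs

lemma gfun_le {t s : ℝ} (ht : 0 < t) (hs : 0 < s) :
    gfun G t ≤ G (s + t) - G s :=
  csInf_le (gfun_bddBelow hC hlin ht) ⟨s, hs, rfl⟩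

lemma le_gfun {t b : ℝ} (ht : 0 < t) (hb : ∀ s, 0 < s → b ≤ G (s + t) - G s) :
    b ≤ gfun G t := by
  refine le_csInf ⟨G (1 + t) - G 1, ⟨1, by norm_num, rfl⟩⟩ ?_
  rintro y ⟨s, hs, rfl⟩
  exact hb s hs

lemma neg_le_gfun {t : ℝ} (ht : 0 < t) : -(C * (1 + t)) ≤ gfun G t :=
  le_gfun hC hlin ht fun s hs => incr_lb hC hlin ht hs

lemma gfun_le_C {t : ℝ} (ht : 0 < t) : gfun G t ≤ C * (1 + t) := by
  refine (gfun_le hC hlin ht one_pos).trans ?_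
  have h := hlin (1 + t) (by simp [Set.mem_Ioi]; linarith) 1 (by norm_num)
  have ha : |(1:ℝ) + t - 1| = t := by rw [add_sub_cancel_left, abs_of_pos ht]
  rw [ha] at h
  have := le_abs_self (G (1 + t) - G 1)
  linarith

lemma gfun_superadd {t u : ℝ} (ht : 0 < t) (hu : 0 < u) :
    gfun G t + gfun G u ≤ gfun G (t + u) := by
  refine le_gfun hC hlin (by linarith) fun s hs => ?_
  have h1 : gfun G t ≤ G (s + t) - G s := gfun_le hC hlin ht hs
  have h2 : gfun G u ≤ G ((s + t) + u) - G (s + t) := gfun_le hC hlin hu (by linarith)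
  have : s + (t + u) = (s + t) + u := by ring
  rw [this]
  linarith

lemma gfun_nsmul {t : ℝ} (ht : 0 < t) : ∀ n : ℕ, ((n+1 : ℕ) : ℝ) * gfun G t ≤ gfun G ((n+1 : ℕ) * t) := by
  intro n
  induction n with
  | zero => simp
  | succ k ih =>
    have hpos : (0:ℝ) < ((k+1 : ℕ) : ℝ) * t := by positivity
    have hsa := gfun_superadd hC hlin hpos ht
    have heq : ((k+1:ℕ):ℝ) * t + t = ((k+2:ℕ):ℝ) * t := by push_cast; ring
    rw [heq] at hsa
    have : ((k+2:ℕ):ℝ) * gfun G t = ((k+1:ℕ):ℝ) * gfun G t + gfun G t := by push_cast; ring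
    rw [this]
    have := ih
    calc ((k+1:ℕ):ℝ) * gfun G t + gfun G t ≤ gfun G (((k+1:ℕ):ℝ) * t) + gfun G t := by linarith
    _ ≤ gfun G (((k+2:ℕ):ℝ) * t) := hsa

lemma gfun_le_lin {t : ℝ} (ht : 0 < t) : gfun G t ≤ C * t := by
  have key : ∀ n : ℕ, gfun G t ≤ C * t + C / ((n:ℝ)+1) := by
    intro n
    have h1 := gfun_nsmul hC hlin ht n
    have h2 := gfun_le_C hC hlin (t := ((n+1:ℕ):ℝ) * t) (by positivity)
    have hn : (0:ℝ) < (n:ℝ)+1 := by positivity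
    have hcast : ((n+1:ℕ):ℝ) = (n:ℝ)+1 := by push_cast; ring
    rw [hcast] at h1 h2
    have h3 : ((n:ℝ)+1) * gfun G t ≤ C + C * (((n:ℝ)+1) * t) := by
      refine h1.trans (h2.trans ?_); rw [mul_add, mul_one]
    rw [add_comm, div_add' _ _ _ (ne_of_gt hn), le_div_iff₀ hn]
    nlinarith [h3]
  have hten : Tendsto (fun n : ℕ => C * t + C / ((n:ℝ)+1)) atTop (nhds (C * t)) := by
    have h0 : Tendsto (fun n : ℕ => C / ((n:ℝ)+1)) atTop (nhds 0) :=
      Tendsto.div_atTop tendsto_const_nhds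
        (tendsto_atTop_add_const_right atTop 1 tendsto_natCast_atTop_atTop)
    simpa using tendsto_const_nhds.add h0
  exact ge_of_tendsto hten (Eventually.of_forall key)

lemma gfun_div_le {t : ℝ} (ht : 0 < t) :
    gfun G t / t ≤ sSup ((fun u => gfun G u / u) '' Ioi 0) := by
  refine le_csSup ⟨C, ?_⟩ ⟨t, ht, rfl⟩
  rintro y ⟨u, hu, rfl⟩
  rw [Set.mem_Ioi] at hu
  exact div_le_of_le_mul₀ (le_of_lt hu) (le_of_lt hC) (by have := gfun_le_lin hC hlin hu; linarith)

lemma fekete :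
    Tendsto (fun t => gfun G t / t) atTop (nhds (sSup ((fun u => gfun G u / u) '' Ioi 0))) := by
  set L := sSup ((fun u => gfun G u / u) '' Ioi (0:ℝ)) with hL
  rw [tendsto_order]
  constructor
  · intro a ha
    obtain ⟨y, ⟨t₀, ht₀, rfl⟩, hy⟩ :=
      exists_lt_of_lt_csSup (Set.nonempty_Ioi.image _) ha
    rw [Set.mem_Ioi] at ht₀
    set b := gfun G t₀ / t₀ with hb
    have hbt : gfun G t₀ = b * t₀ := by rw [hb, div_mul_cancel₀ _ (ne_of_gt ht₀)]
    set K := 2*t₀* |b| + C*(1+2*t₀) with hK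
    have hev1 : ∀ᶠ t : ℝ in atTop, 2*t₀ + 1 ≤ t := eventually_ge_atTop _
    have hev2 : ∀ᶠ t : ℝ in atTop, K/t < b - a := by
      have h0 : Tendsto (fun t : ℝ => K/t) atTop (nhds 0) :=
        Tendsto.div_atTop tendsto_const_nhds tendsto_id
      have : {x : ℝ | x < b - a} ∈ nhds (0:ℝ) := by
        apply IsOpen.mem_nhds isOpen_Iio; simpa using hy
      exact h0.eventually_mem this
    filter_upwards [hev1, hev2] with t h1 h2
    have htpos : 0 < t := by linarith
    set k : ℤ := ⌊t/t₀⌋ with hk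
    have hfl : (k:ℝ) ≤ t/t₀ := Int.floor_le _
    have hfl2 : t/t₀ < (k:ℝ) + 1 := Int.lt_floor_add_one _
    have hdiv2 : (2:ℝ) < t/t₀ := by
      rw [lt_div_iff₀ ht₀]; nlinarith
    have hk1 : (1:ℤ) < k := by
      have : (1:ℝ) < (k:ℝ) := by linarith
      exact_mod_cast this
    obtain ⟨m, hm⟩ : ∃ m : ℕ, k - 1 = (m:ℤ) + 1 := by
      refine ⟨(k-2).toNat, ?_⟩
      rw [Int.toNat_of_nonneg (by omega)]; omega
    have hmc : ((m:ℝ) + 1) = (k:ℝ) - 1 := by exact_mod_cast congrArg (Int.cast : ℤ → ℝ) hm.symm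
    set r := t - ((k:ℝ) - 1) * t₀ with hr
    have hrlb : t₀ ≤ r := by
      have : (k:ℝ) * t₀ ≤ t := by rwa [← le_div_iff₀ ht₀]
      simp only [hr]; nlinarith
    have hrub : r < 2*t₀ := by
      have : t < ((k:ℝ)+1) * t₀ := by rwa [← div_lt_iff₀ ht₀]
      simp only [hr]; nlinarith
    have hkt₀pos : 0 < ((k:ℝ) - 1) * t₀ := by
      have : (1:ℝ) < (k:ℝ) := by exact_mod_cast hk1
      nlinarith
    -- superadditivity
    have hsa := gfun_superadd hC hlin hkt₀pos (lt_of_lt_of_le ht₀ hrlb)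
    have heq : ((k:ℝ) - 1) * t₀ + r = t := by simp only [hr]; ring
    rw [heq] at hsa
    -- iterate
    have hit := gfun_nsmul hC hlin ht₀ m
    have hcast : ((m+1:ℕ):ℝ) = (k:ℝ) - 1 := by push_cast; linarith [hmc]
    rw [hcast] at hit
    -- bound g r
    have hgr : -(C*(1+2*t₀)) ≤ gfun G r := by
      refine le_trans ?_ (neg_le_gfun hC hlin (lt_of_lt_of_le ht₀ hrlb))
      have : r ≤ 2*t₀ := le_of_lt hrub
      nlinarith
    -- combine
    have hgt : ((k:ℝ) - 1) * t₀ * b - C*(1+2*t₀) ≤ gfun G t := by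
      rw [hbt] at hit
      have hring : ((k:ℝ) - 1) * (b * t₀) = ((k:ℝ) - 1) * t₀ * b := by ring
      rw [hring] at hit
      linarith [hsa, hgr, hit]
    have hr0 : 0 ≤ r := le_trans (le_of_lt ht₀) hrlb
    have hrb : r * b ≤ 2*t₀* |b| := by
      have h5 : r * b ≤ r * |b| := mul_le_mul_of_nonneg_left (le_abs_self b) hr0
      have h6 : r * |b| ≤ 2*t₀* |b| := mul_le_mul_of_nonneg_right (le_of_lt hrub) (abs_nonneg b)
      linarith
    have hfinal : t * b - K ≤ gfun G t := by
      have hkr : ((k:ℝ) - 1) * t₀ = t - r := by simp only [hr]; ring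
      rw [hkr] at hgt
      have hring : (t - r) * b = t * b - r * b := by ring
      rw [hring] at hgt
      simp only [hK]
      linarith [hgt, hrb]
    rw [lt_div_iff₀ htpos]
    have hKt : K < (b - a) * t := by rwa [div_lt_iff₀ htpos] at h2
    have hring : a * t = t * b - (b - a) * t := by ring
    rw [hring]
    linarith [hfinal, hKt]
  · intro a ha
    filter_upwards [eventually_gt_atTop (0:ℝ)] with t ht
    exact lt_of_le_of_lt (gfun_div_le hC hlin ht) ha

lemma essInf_le_limit {L : ℝ}
    (hLt : Tendsto (fun t => gfun G t / t) atTop (nhds L))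
    {A A' : ℝ → ℝ}
    (hderiv : ∀ x ∈ Ioi (0:ℝ), HasDerivAt A (A' x) x)
    {M : ℝ} (hM : ∀ x ∈ Ioi (0:ℝ), |A' x| ≤ M)
    {M₂ : ℝ} (hM₂ : ∀ x ∈ Ioi (0:ℝ), |A x - G x| ≤ M₂) :
    essInf A' (volume.restrict (Ioi (0:ℝ))) ≤ L := by
  set μ := volume.restrict (Ioi (0:ℝ)) with hμ
  set m := essInf A' μ with hm
  have hbd : IsBoundedUnder (· ≥ ·) (ae μ) A' := by
    refine ⟨-M, ?_⟩
    rw [eventually_map]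
    rw [hμ, ae_restrict_iff' measurableSet_Ioi]
    exact ae_of_all _ fun x hx => (abs_le.1 (hM x hx)).1
  have hae : ∀ᵐ x ∂μ, m ≤ A' x := ae_essInf_le hbd
  have key : ∀ t : ℝ, 0 < t → m * t - 2 * M₂ ≤ gfun G t := by
    intro t ht
    refine le_gfun hC hlin ht fun s hs => ?_
    have hstpos : 0 < s + t := by linarith
    have hsle : s ≤ s + t := by linarith
    have hIccsub : Icc s (s+t) ⊆ Ioi (0:ℝ) := fun x hx => lt_of_lt_of_le hs hx.1
    have hIocsub : Ioc s (s+t) ⊆ Ioi (0:ℝ) := fun x hx => lt_trans hs hx.1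
    -- integrability of A'
    have hcongr : deriv A =ᵐ[volume.restrict (Ioc s (s+t))] A' :=
      (ae_restrict_iff' measurableSet_Ioc).2
        (ae_of_all _ fun x hx => ((hderiv x (hIocsub hx)).deriv))
    have hmeasA' : AEStronglyMeasurable A' (volume.restrict (Ioc s (s+t))) :=
      ((measurable_deriv A).aestronglyMeasurable).congr hcongr
    have hboundA' : ∀ᵐ x ∂(volume.restrict (Ioc s (s+t))), ‖A' x‖ ≤ M := by
      rw [ae_restrict_iff' measurableSet_Ioc]
      exact ae_of_all _ fun x hx => hM x (hIocsub hx)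
    have hintOn : IntegrableOn A' (Ioc s (s+t)) volume := by
      refine Integrable.mono' (g := fun _ => M) ?_ hmeasA' hboundA'
      exact integrableOn_const measure_Ioc_lt_top.ne
    have hint : IntervalIntegrable A' volume s (s+t) := by
      rw [intervalIntegrable_iff_integrableOn_Ioc_of_le hsle]
      exact hintOn
    -- FTC
    have hftc : ∫ y in s..(s+t), A' y = A (s+t) - A s := by
      refine intervalIntegral.integral_eq_sub_of_hasDerivAt (fun x hx => ?_) hint
      rw [uIcc_of_le hsle] at hx
      exact hderiv x (hIccsub hx)
    -- lower bound on integral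
    have haesub : ∀ᵐ x ∂(volume.restrict (Icc s (s+t))), m ≤ A' x :=
      ae_restrict_of_ae_restrict_of_subset hIccsub hae
    have hmono : ∫ y in s..(s+t), (m:ℝ) ≤ ∫ y in s..(s+t), A' y := by
      refine intervalIntegral.integral_mono_ae_restrict hsle intervalIntegrable_const hint ?_
      exact haesub
    rw [intervalIntegral.integral_const, hftc] at hmono
    have hconst : (s + t - s) • m = m * t := by rw [smul_eq_mul]; ring_nf
    rw [hconst] at hmono
    have h1 := abs_le.1 (hM₂ s (Set.mem_Ioi.2 hs))
    have h2 := abs_le.1 (hM₂ (s+t) (Set.mem_Ioi.2 hstpos))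
    linarith [hmono, h1.1, h1.2, h2.1, h2.2]
  have hdivkey : ∀ᶠ t : ℝ in atTop, m - 2*M₂/t ≤ gfun G t / t := by
    filter_upwards [eventually_gt_atTop (0:ℝ)] with t ht
    have heq : m - 2*M₂/t = (m*t - 2*M₂)/t := by field_simp
    rw [heq]
    gcongr
    exact key t ht
  have htend2 : Tendsto (fun t : ℝ => m - 2*M₂/t) atTop (nhds m) := by
    have h0 : Tendsto (fun t : ℝ => 2*M₂/t) atTop (nhds 0) :=
      Tendsto.div_atTop tendsto_const_nhds tendsto_id
    simpa using tendsto_const_nhds.sub h0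
  exact le_of_tendsto_of_tendsto htend2 hLt hdivkey

lemma exists_approx {L ε : ℝ} (hε : 0 < ε)
    (hLt : Tendsto (fun t => gfun G t / t) atTop (nhds L)) :
    ∃ A A' : ℝ → ℝ,
      (∀ x ∈ Ioi (0:ℝ), HasDerivAt A (A' x) x) ∧
      (∃ M : ℝ, ∀ x ∈ Ioi (0:ℝ), |A' x| ≤ M) ∧
      (∃ M : ℝ, ∀ x ∈ Ioi (0:ℝ), |A x - G x| ≤ M) ∧
      L - ε ≤ essInf A' (volume.restrict (Ioi (0:ℝ))) := by
  set κ := L - ε with hκ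
  -- threshold T
  obtain ⟨T₀, hT₀⟩ := eventually_atTop.1
    ((hLt.eventually (eventually_gt_nhds (show κ < L by simp only [hκ]; linarith))).and
      (eventually_ge_atTop (1:ℝ)))
  set T := max T₀ 1 with hT
  have hT1 : (1:ℝ) ≤ T := le_max_right _ _
  have hTpos : (0:ℝ) < T := lt_of_lt_of_le one_pos hT1
  have hTg : ∀ t, T ≤ t → κ * t ≤ gfun G t := by
    intro t ht
    obtain ⟨h1, h2⟩ := hT₀ t (le_trans (le_max_left _ _) ht)
    have htpos : (0:ℝ) < t := lt_of_lt_of_le one_pos h2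
    exact le_of_lt ((lt_div_iff₀ htpos).1 h1)
  set c₀ := C*(1+T) + |κ| *T with hc₀def
  have hc₀ : 0 ≤ c₀ := by
    have := abs_nonneg κ
    nlinarith
  set c₂ := 2*c₀ + C*3 + 2* |κ| with hc₂def
  have hc₂ : 0 ≤ c₂ := by
    have := abs_nonneg κ
    nlinarith
  set φ := fun y : ℝ => G y - κ*y with hφ
  have hphi : ∀ x, 0 < x → ∀ y, x ≤ y → φ x - c₀ ≤ φ y := by
    intro x hx y hxy
    have hy : 0 < y := lt_of_lt_of_le hx hxy
    have hring : κ*(y-x) = κ*y - κ*x := by ring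
    rcases le_or_gt T (y - x) with hcase | hcase
    · have hpos : 0 < y - x := lt_of_lt_of_le hTpos hcase
      have h1 : gfun G (y-x) ≤ G (x + (y-x)) - G x := gfun_le hC hlin hpos hx
      have hxy2 : x + (y-x) = y := by ring
      rw [hxy2] at h1
      have h2 := hTg (y-x) hcase
      simp only [hφ]
      linarith [h1, h2, hc₀, hring]
    · have habs := hlin y (Set.mem_Ioi.2 hy) x (Set.mem_Ioi.2 hx)
      have hd0 : 0 ≤ y - x := by linarith
      have habs2 : |y - x| = y - x := abs_of_nonneg hd0
      rw [habs2] at habs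
      have hd1 : -(C*(1+T)) ≤ G y - G x := by
        have h5 := neg_abs_le (G y - G x)
        nlinarith [habs, hcase, hC]
      have hd2 : κ*(y-x) ≤ |κ| * T := by
        calc κ*(y-x) ≤ |κ*(y-x)| := le_abs_self _
        _ = |κ| * (y-x) := by rw [abs_mul, abs_of_nonneg hd0]
        _ ≤ |κ| * T := mul_le_mul_of_nonneg_left (le_of_lt hcase) (abs_nonneg κ)
      simp only [hφ]
      linarith [hd1, hd2, hring, hc₀def]
  -- global lower bound for φ on Ioi 0
  have hphi_glb : ∀ y, 0 < y → min (φ 1 - c₀) (G 1 - C*2 - |κ|) ≤ φ y := by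
    intro y hy
    rcases le_or_gt 1 y with h1y | h1y
    · exact le_trans (min_le_left _ _) (hphi 1 one_pos y h1y)
    · refine le_trans (min_le_right _ _) ?_
      have habs := hlin y (Set.mem_Ioi.2 hy) 1 (Set.mem_Ioi.2 one_pos)
      have h2 : |y - 1| ≤ 1 := by rw [abs_le]; constructor <;> linarith
      have h3 : κ * y ≤ |κ| := by
        calc κ * y ≤ |κ * y| := le_abs_self _
        _ = |κ| * |y| := abs_mul _ _
        _ ≤ |κ| * 1 := mul_le_mul_of_nonneg_left (by rw [abs_of_pos hy]; linarith) (abs_nonneg κ)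
        _ = |κ| := mul_one _
      have h4 : -(C*2) ≤ G y - G 1 := by
        have h5 := neg_abs_le (G y - G 1)
        nlinarith [habs, h2, hC]
      simp only [hφ]
      linarith [h3, h4]
  set m₀ := min (φ 1 - c₀) (G 1 - C*2 - |κ|) with hm₀
  have hSne : ∀ x:ℝ, (φ '' (Ici x ∩ Ioi 0)).Nonempty := fun x =>
    ⟨φ (max x 1), ⟨max x 1, ⟨Set.mem_Ici.2 (le_max_left _ _), Set.mem_Ioi.2 (lt_of_lt_of_le one_pos (le_max_right _ _))⟩, rfl⟩⟩
  have hSbdd : ∀ x:ℝ, BddBelow (φ '' (Ici x ∩ Ioi 0)) := by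
    intro x
    refine ⟨m₀, ?_⟩
    rintro y ⟨z, ⟨_, hz⟩, rfl⟩
    exact hphi_glb z hz
  set h := fun x : ℝ => sInf (φ '' (Ici x ∩ Ioi 0)) with hh
  have hmono : Monotone h := by
    intro x₁ x₂ hx
    exact csInf_le_csInf (hSbdd x₁) (hSne x₂)
      (Set.image_mono (Set.inter_subset_inter_left _ (Set.Ici_subset_Ici.2 hx)))
  have hhle : ∀ x, 0 < x → h x ≤ φ x := fun x hx =>
    csInf_le (hSbdd x) ⟨x, ⟨le_refl x, hx⟩, rfl⟩
  have hhge : ∀ x, 0 < x → φ x - c₀ ≤ h x := by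
    intro x hx
    refine le_csInf (hSne x) ?_
    rintro y ⟨z, ⟨hz1, _⟩, rfl⟩
    exact hphi x hx z hz1
  set B := fun x : ℝ => κ * x + h x with hBdef
  have hBmeas : Measurable B := (measurable_id.const_mul κ).add hmono.measurable
  have hBG : ∀ x, 0 < x → |B x - G x| ≤ c₀ := by
    intro x hx
    have h1 := hhle x hx
    have h2 := hhge x hx
    have he : B x - G x = h x - φ x := by simp only [hBdef, hφ]; ring
    rw [he, abs_le]
    exact ⟨by linarith, by linarith⟩
  have hBlow : ∀ x y : ℝ, x ≤ y → κ * (y - x) ≤ B y - B x := by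
    intro x y hxy
    have hm := hmono hxy
    have hring : κ*(y-x) = κ*y - κ*x := by ring
    simp only [hBdef]
    linarith [hring, hm]
  have hBabs : ∀ x y : ℝ, 0 < x → x ≤ y → y ≤ x + 2 → |B y - B x| ≤ c₂ := by
    intro x y hx hxy hy2
    have hygt : 0 < y := lt_of_lt_of_le hx hxy
    have hG1 := hlin y (Set.mem_Ioi.2 hygt) x (Set.mem_Ioi.2 hx)
    have habs : |y - x| ≤ 2 := by rw [abs_of_nonneg (by linarith)]; linarith
    have hBGx := abs_le.1 (hBG x hx)
    have hBGy := abs_le.1 (hBG y hygt)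
    have hlow := hBlow x y hxy
    rw [abs_le]
    constructor
    · have h5 : |κ * (y-x)| ≤ |κ| * 2 := by
        rw [abs_mul]
        exact mul_le_mul_of_nonneg_left habs (abs_nonneg κ)
      have h6 := neg_abs_le (κ * (y-x))
      linarith [hc₀, hC, h5, h6, hlow]
    · have h6 : G y - G x ≤ C * (1 + |y - x|) := le_trans (le_abs_self _) hG1
      have h7 : C*(1+|y-x|) ≤ C*3 := by nlinarith [habs, hC]
      linarith [hBGx.2, hBGy.2, h6, h7, abs_nonneg κ]
  have hBint : ∀ p q : ℝ, 0 < p → p ≤ q → IntervalIntegrable B volume p q := by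
    intro p q hp hpq
    rw [intervalIntegrable_iff_integrableOn_Ioc_of_le hpq]
    refine Integrable.mono' (g := fun _ => |G p| + C*(1+(q-p)) + c₀)
      (integrableOn_const measure_Ioc_lt_top.ne)
      (hBmeas.aestronglyMeasurable.restrict) ?_
    rw [ae_restrict_iff' measurableSet_Ioc]
    refine ae_of_all _ fun x hx => ?_
    have hx0 : 0 < x := lt_trans hp hx.1
    have h1 := abs_le.1 (hBG x hx0)
    have h2 := abs_le.1 (hlin x (Set.mem_Ioi.2 hx0) p (Set.mem_Ioi.2 hp))
    have h3 : |x - p| ≤ q - p := by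
      rw [abs_of_nonneg (by linarith [hx.1])]
      linarith [hx.2]
    have h5 := le_abs_self (G p)
    have h6 := neg_abs_le (G p)
    have h7 : C * |x - p| ≤ C * (q - p) := mul_le_mul_of_nonneg_left h3 hC.le
    show |B x| ≤ |G p| + C*(1+(q-p)) + c₀
    rw [abs_le]
    constructor <;> linarith [h1.1, h1.2, h2.1, h2.2, h5, h6, h7]
  -- first mollification
  set F₁ := fun x : ℝ => ∫ u in x..(x+1), B u with hF₁def
  have hF₁diff : ∀ x y : ℝ, 0 < x → x ≤ y →
      F₁ y - F₁ x = ∫ u in x..y, (B (u+1) - B u) := by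
    intro x y hx hxy
    have hy : 0 < y := lt_of_lt_of_le hx hxy
    have i1 : IntervalIntegrable B volume x y := hBint x y hx hxy
    have i2 : IntervalIntegrable B volume y (y+1) := hBint y (y+1) hy (by linarith)
    have i3 : IntervalIntegrable B volume x (x+1) := hBint x (x+1) hx (by linarith)
    have i4 : IntervalIntegrable B volume (x+1) (y+1) := hBint (x+1) (y+1) (by linarith) (by linarith)
    have e1 := intervalIntegral.integral_add_adjacent_intervals i1 i2
    have e2 := intervalIntegral.integral_add_adjacent_intervals i3 i4
    have e4 : (∫ u in x..y, B (u+1)) = ∫ u in (x+1)..(y+1), B u :=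
      intervalIntegral.integral_comp_add_right B 1
    have i5 : IntervalIntegrable (fun u => B (u+1)) volume x y := by
      have h9 := i4.comp_add_right 1
      simpa using h9
    have e5 : (∫ u in x..y, (B (u+1) - B u)) = (∫ u in x..y, B (u+1)) - ∫ u in x..y, B u :=
      intervalIntegral.integral_sub i5 i1
    rw [e5, e4]
    simp only [hF₁def]
    linarith [e1, e2]
  have hF₁lipr : ∀ x y : ℝ, 0 < x → x ≤ y → |F₁ y - F₁ x| ≤ c₂ * (y - x) := by
    intro x y hx hxy
    rw [hF₁diff x y hx hxy]
    have hb : ∀ u ∈ Set.uIoc x y, ‖B (u+1) - B u‖ ≤ c₂ := by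
      intro u hu
      rw [uIoc_of_le hxy] at hu
      have hu0 : 0 < u := lt_trans hx hu.1
      rw [Real.norm_eq_abs]
      exact hBabs u (u+1) hu0 (by linarith) (by linarith)
    have hn := intervalIntegral.norm_integral_le_of_norm_le_const hb
    rw [Real.norm_eq_abs, abs_of_nonneg (by linarith : (0:ℝ) ≤ y - x)] at hn
    exact hn
  have hF₁cont : ContinuousOn F₁ (Ioi (0:ℝ)) := by
    refine (LipschitzOnWith.of_dist_le_mul (K := Real.toNNReal c₂) ?_).continuousOn
    intro a ha b hb
    rw [Set.mem_Ioi] at ha hb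
    rw [Real.dist_eq, Real.dist_eq, Real.coe_toNNReal _ hc₂]
    rcases le_total a b with hab | hab
    · have h1 := hF₁lipr a b ha hab
      have h2 : |a - b| = b - a := by rw [abs_sub_comm]; exact abs_of_nonneg (by linarith)
      rw [h2, abs_sub_comm]
      linarith [h1]
    · have h1 := hF₁lipr b a hb hab
      have h2 : |a - b| = a - b := abs_of_nonneg (by linarith)
      rw [h2]
      linarith [h1]
  -- derivative candidate
  set D₁ := fun u : ℝ => F₁ (u+1) - F₁ u with hD₁def
  have hD₁ub : ∀ u, 0 < u → |D₁ u| ≤ c₂ := by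
    intro u hu
    have := hF₁lipr u (u+1) hu (by linarith)
    simp only [hD₁def]
    have he : u + 1 - u = 1 := by ring
    rw [he] at this
    linarith [this]
  have hD₁lb : ∀ u, 0 < u → κ ≤ D₁ u := by
    intro u hu
    have i1 : IntervalIntegrable B volume u (u+1) := hBint u (u+1) hu (by linarith)
    have i2 : IntervalIntegrable B volume (u+1) (u+1+1) := hBint (u+1) (u+1+1) (by linarith) (by linarith)
    have i5 : IntervalIntegrable (fun v => B (v+1)) volume u (u+1) := by
      have h9 := i2.comp_add_right 1
      simpa using h9
    have e4 : F₁ (u+1) = ∫ v in u..(u+1), B (v+1) := by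
      simp only [hF₁def]
      rw [intervalIntegral.integral_comp_add_right B 1]
    have hmono2 : (∫ v in u..(u+1), (B v + κ)) ≤ ∫ v in u..(u+1), B (v+1) := by
      refine intervalIntegral.integral_mono_on (by linarith) (i1.add intervalIntegrable_const) i5
        fun v hv => ?_
      have hbl := hBlow v (v+1) (by linarith)
      have he : κ * (v+1-v) = κ := by ring
      rw [he] at hbl
      linarith
    have e6 : (∫ v in u..(u+1), (B v + κ)) = F₁ u + κ := by
      rw [intervalIntegral.integral_add i1 intervalIntegrable_const,
        intervalIntegral.integral_const]
      have he : (u+1-u) • κ = κ := by rw [smul_eq_mul]; ring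
      rw [he]
    simp only [hD₁def]
    rw [e4]
    linarith [hmono2, e6]
  have hD₁cont : ContinuousOn D₁ (Ioi (0:ℝ)) := by
    have h1 : ContinuousOn (fun u : ℝ => F₁ (u+1)) (Ioi 0) := by
      refine hF₁cont.comp ((continuous_id.add continuous_const).continuousOn) ?_
      intro u hu
      rw [Set.mem_Ioi] at hu
      show u + 1 ∈ Ioi (0:ℝ)
      rw [Set.mem_Ioi]
      linarith
    exact h1.sub hF₁cont
  -- the smooth function A
  set A := fun x : ℝ => ∫ u in (1:ℝ)..x, D₁ u with hAdef
  have hsubIoi : ∀ x : ℝ, 0 < x → uIcc (1:ℝ) x ⊆ Ioi 0 := by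
    intro x hx y hy
    rw [Set.mem_Ioi]
    rcases le_total (1:ℝ) x with hc | hc
    · rw [uIcc_of_le hc] at hy; linarith [hy.1]
    · rw [uIcc_of_ge hc] at hy; linarith [hy.1]
  have hD₁int : ∀ x : ℝ, 0 < x → IntervalIntegrable D₁ volume 1 x := fun x hx =>
    (hD₁cont.mono (hsubIoi x hx)).intervalIntegrable
  have hAderiv : ∀ x ∈ Ioi (0:ℝ), HasDerivAt A (D₁ x) x := by
    intro x hx
    rw [Set.mem_Ioi] at hx
    exact intervalIntegral.integral_hasDerivAt_right (hD₁int x hx)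
      (ContinuousOn.stronglyMeasurableAtFilter isOpen_Ioi hD₁cont x hx)
      (hD₁cont.continuousAt (Ioi_mem_nhds hx))
  -- F₁ is interval integrable on positive intervals
  have hF₁int : ∀ p q : ℝ, 0 < p → 0 < q → IntervalIntegrable F₁ volume p q := by
    intro p q hp hq
    refine (hF₁cont.mono ?_).intervalIntegrable
    intro y hy
    rw [Set.mem_Ioi]
    rcases le_total p q with hc | hc
    · rw [uIcc_of_le hc] at hy; linarith [hy.1]
    · rw [uIcc_of_ge hc] at hy; linarith [hy.1]
  -- value formula for A
  have hAval : ∀ x : ℝ, 0 < x →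
      A x = (∫ u in x..(x+1), F₁ u) - ∫ u in (1:ℝ)..2, F₁ u := by
    intro x hx
    have iF1x : IntervalIntegrable (fun u => F₁ (u+1)) volume 1 x := by
      have h9 := (hF₁int 2 (x+1) two_pos (by linarith)).comp_add_right 1
      rw [show (2:ℝ)-1 = 1 by norm_num, show x+1-1 = x by ring] at h9
      exact h9
    have iF2 : IntervalIntegrable F₁ volume 1 x := hF₁int 1 x one_pos hx
    have e1 : A x = (∫ u in (1:ℝ)..x, F₁ (u+1)) - ∫ u in (1:ℝ)..x, F₁ u := by
      simp only [hAdef, hD₁def]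
      exact intervalIntegral.integral_sub iF1x iF2
    have e2 : (∫ u in (1:ℝ)..x, F₁ (u+1)) = ∫ u in (2:ℝ)..(x+1), F₁ u := by
      have h9 := intervalIntegral.integral_comp_add_right (a := (1:ℝ)) (b := x) F₁ 1
      rw [show (1:ℝ)+1 = 2 by norm_num] at h9
      exact h9
    have a1 := intervalIntegral.integral_add_adjacent_intervals
      (hF₁int 1 2 one_pos two_pos) (hF₁int 2 (x+1) two_pos (by linarith))
    have a2 := intervalIntegral.integral_add_adjacent_intervals
      (hF₁int 1 x one_pos hx) (hF₁int x (x+1) hx (by linarith))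
    rw [e1, e2]
    linarith [a1, a2]
  -- F₁ is close to G
  have hFG : ∀ x : ℝ, 0 < x → ∀ u ∈ Set.Icc x (x+1), |F₁ u - G x| ≤ c₂ + c₀ := by
    intro x hx u hu
    have hu0 : 0 < u := lt_of_lt_of_le hx hu.1
    have iB : IntervalIntegrable B volume u (u+1) := hBint u (u+1) hu0 (by linarith)
    have e : F₁ u - G x = ∫ v in u..(u+1), (B v - G x) := by
      rw [intervalIntegral.integral_sub iB intervalIntegrable_const,
        intervalIntegral.integral_const]
      have he : (u+1-u) • G x = G x := by rw [smul_eq_mul]; ring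
      rw [he]
    rw [e]
    have hb : ∀ v ∈ Set.uIoc u (u+1), ‖B v - G x‖ ≤ c₂ + c₀ := by
      intro v hv
      rw [uIoc_of_le (by linarith : u ≤ u+1)] at hv
      have h5 : |B v - B x| ≤ c₂ := hBabs x v hx (by linarith [hv.1, hu.1]) (by linarith [hv.2, hu.2])
      have h6 := abs_le.1 (hBG x hx)
      rw [Real.norm_eq_abs]
      have h7 : B v - G x = (B v - B x) + (B x - G x) := by ring
      rw [h7]
      calc |(B v - B x) + (B x - G x)| ≤ |B v - B x| + |B x - G x| := abs_add_le _ _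
      _ ≤ c₂ + c₀ := add_le_add h5 (abs_le.2 h6)
    have hn := intervalIntegral.norm_integral_le_of_norm_le_const hb
    rw [Real.norm_eq_abs] at hn
    have he2 : |u + 1 - u| = 1 := by norm_num
    rw [he2, mul_one] at hn
    exact hn
  -- A is close to G
  have hAG : ∀ x ∈ Ioi (0:ℝ), |A x - G x| ≤ (c₂ + c₀) + |∫ u in (1:ℝ)..2, F₁ u| := by
    intro x hx
    rw [Set.mem_Ioi] at hx
    rw [hAval x hx]
    have iF : IntervalIntegrable F₁ volume x (x+1) := hF₁int x (x+1) hx (by linarith)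
    have e : (∫ u in x..(x+1), F₁ u) - G x = ∫ u in x..(x+1), (F₁ u - G x) := by
      rw [intervalIntegral.integral_sub iF intervalIntegrable_const,
        intervalIntegral.integral_const]
      have he : (x+1-x) • G x = G x := by rw [smul_eq_mul]; ring
      rw [he]
    have hb : ∀ u ∈ Set.uIoc x (x+1), ‖F₁ u - G x‖ ≤ c₂ + c₀ := by
      intro u hu
      rw [uIoc_of_le (by linarith : x ≤ x+1)] at hu
      rw [Real.norm_eq_abs]
      exact hFG x hx u ⟨le_of_lt hu.1, hu.2⟩
    have hn := intervalIntegral.norm_integral_le_of_norm_le_const hb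
    rw [Real.norm_eq_abs] at hn
    have he2 : |x + 1 - x| = 1 := by norm_num
    rw [he2, mul_one] at hn
    rw [← e] at hn
    have htri : |(∫ u in x..(x+1), F₁ u) - (∫ u in (1:ℝ)..2, F₁ u) - G x|
        ≤ |(∫ u in x..(x+1), F₁ u) - G x| + |∫ u in (1:ℝ)..2, F₁ u| := by
      have h7 : (∫ u in x..(x+1), F₁ u) - (∫ u in (1:ℝ)..2, F₁ u) - G x
          = ((∫ u in x..(x+1), F₁ u) - G x) + (-(∫ u in (1:ℝ)..2, F₁ u)) := by ring
      rw [h7]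
      calc |((∫ u in x..(x+1), F₁ u) - G x) + (-(∫ u in (1:ℝ)..2, F₁ u))|
          ≤ |(∫ u in x..(x+1), F₁ u) - G x| + |-(∫ u in (1:ℝ)..2, F₁ u)| := abs_add_le _ _
      _ = |(∫ u in x..(x+1), F₁ u) - G x| + |∫ u in (1:ℝ)..2, F₁ u| := by rw [abs_neg]
    linarith [htri, hn]
  -- essential infimum bound
  have hneb : (ae (volume.restrict (Ioi (0:ℝ)))).NeBot := by
    refine ae_neBot.2 ?_
    rw [Ne, Measure.restrict_eq_zero]
    simp [Real.volume_Ioi]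
  have hbdd2 : IsBoundedUnder (· ≤ ·) (ae (volume.restrict (Ioi (0:ℝ)))) D₁ := by
    refine ⟨c₂, ?_⟩
    rw [eventually_map, ae_restrict_iff' measurableSet_Ioi]
    exact ae_of_all _ fun x hx => (abs_le.1 (hD₁ub x hx)).2
  have hev2 : ∀ᶠ x in ae (volume.restrict (Ioi (0:ℝ))), κ ≤ D₁ x := by
    rw [ae_restrict_iff' measurableSet_Ioi]
    exact ae_of_all _ fun x hx => hD₁lb x hx
  have hessinf : κ ≤ essInf D₁ (volume.restrict (Ioi (0:ℝ))) :=
    le_liminf_of_le hbdd2.isCoboundedUnder_ge hev2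
  exact ⟨A, D₁, hAderiv, ⟨c₂, fun x hx => hD₁ub x hx⟩,
    ⟨(c₂ + c₀) + |∫ u in (1:ℝ)..2, F₁ u|, hAG⟩, hessinf⟩

end Basic
/-- For measurable `G : (0,∞) → ℝ` with sublinear increments, the least global
growth-rate `⌊G⌋ = lim_{t→+∞} inf_{s, s+t ∈ ℝ⁺} (G(s+t) - G(s))/t` exists and equals
the supremum of `essinf A'` over all `A` with `A' ∈ L^∞(ℝ⁺)` and `A - G ∈ L^∞(ℝ⁺)`. -/
theorem least_global_growth_rate_characterization
    (G : ℝ → ℝ) (hG : Measurable G) (C : ℝ) (hC : 0 < C)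
    (hlin : ∀ t₁ ∈ Ioi (0:ℝ), ∀ t₂ ∈ Ioi (0:ℝ), |G t₁ - G t₂| ≤ C * (1 + |t₁ - t₂|)) :
    ∃ L : ℝ,
      Tendsto (fun t : ℝ =>
          sInf ((fun s => (G (s + t) - G s) / t) '' {s | s ∈ Ioi (0:ℝ) ∧ s + t ∈ Ioi (0:ℝ)}))
        atTop (nhds L) ∧
      L = sSup {m : ℝ | ∃ A A' : ℝ → ℝ,
          (∀ x ∈ Ioi (0:ℝ), HasDerivAt A (A' x) x) ∧
          (∃ M : ℝ, ∀ x ∈ Ioi (0:ℝ), |A' x| ≤ M) ∧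
          (∃ M : ℝ, ∀ x ∈ Ioi (0:ℝ), |A x - G x| ≤ M) ∧
          m = essInf A' (volume.restrict (Ioi (0:ℝ)))} := by
  set L := sSup ((fun u => gfun G u / u) '' Ioi (0:ℝ)) with hLdef
  have hLt : Tendsto (fun t => gfun G t / t) atTop (nhds L) := fekete hC hlin
  set S := {m : ℝ | ∃ A A' : ℝ → ℝ,
      (∀ x ∈ Ioi (0:ℝ), HasDerivAt A (A' x) x) ∧
      (∃ M : ℝ, ∀ x ∈ Ioi (0:ℝ), |A' x| ≤ M) ∧
      (∃ M : ℝ, ∀ x ∈ Ioi (0:ℝ), |A x - G x| ≤ M) ∧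
      m = essInf A' (volume.restrict (Ioi (0:ℝ)))} with hSdef
  refine ⟨L, ?_, ?_⟩
  · have hcong : ∀ᶠ t : ℝ in atTop,
        gfun G t / t = sInf ((fun s => (G (s + t) - G s) / t) ''
          {s | s ∈ Ioi (0:ℝ) ∧ s + t ∈ Ioi (0:ℝ)}) := by
      filter_upwards [eventually_gt_atTop (0:ℝ)] with t ht
      have hset : {s | s ∈ Ioi (0:ℝ) ∧ s + t ∈ Ioi (0:ℝ)} = Ioi (0:ℝ) := by
        ext s
        simp only [Set.mem_setOf_eq, Set.mem_Ioi]
        exact ⟨fun hh => hh.1, fun hh => ⟨hh, by linarith⟩⟩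
      rw [hset]
      have himg : (fun s => (G (s + t) - G s) / t) '' Ioi 0
          = (fun x => t⁻¹ * x) '' ((fun s => G (s + t) - G s) '' Ioi 0) := by
        rw [← Set.image_comp]
        apply Set.image_congr
        intro s _
        simp only [Function.comp_apply]
        rw [div_eq_inv_mul]
      rw [himg]
      have hsmul : (fun x => t⁻¹ * x) '' ((fun s => G (s + t) - G s) '' Ioi 0)
          = t⁻¹ • ((fun s => G (s + t) - G s) '' Ioi 0) := rfl
      rw [hsmul, Real.sInf_smul_of_nonneg (by positivity)]
      rw [smul_eq_mul, div_eq_inv_mul]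
      rfl
    exact hLt.congr' hcong
  · have hub : ∀ m ∈ S, m ≤ L := by
      rintro m ⟨A, A', hd, ⟨M, hM⟩, ⟨M₂, hM₂⟩, rfl⟩
      exact essInf_le_limit hC hlin hLt hd hM hM₂
    have happrox : ∀ ε : ℝ, 0 < ε → ∃ m ∈ S, L - ε ≤ m := by
      intro ε hε
      obtain ⟨A, A', h1, h2, h3, h4⟩ := exists_approx hC hlin hε hLt
      exact ⟨essInf A' (volume.restrict (Ioi 0)), ⟨A, A', h1, h2, h3, rfl⟩, h4⟩
    obtain ⟨m₁, hm₁S, _⟩ := happrox 1 one_pos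
    refine le_antisymm ?_ (csSup_le ⟨m₁, hm₁S⟩ hub)
    refine le_of_forall_pos_le_add fun ε hε => ?_
    obtain ⟨m, hmS, hm⟩ := happrox ε hε
    have hle : m ≤ sSup S := le_csSup ⟨L, hub⟩ hmS
    linarith
end

section
/- Let G : ℝ → ℝ be measurable with |G(t₁) - G(t₂)| ≤ C(1 + |t₁ - t₂|). Then the least global growth-rate of G over ℝ equals the minimum of the least global growth-rates of G over (-∞,0) and over (0,∞): ⌊G⌋_ℝ = min{ ⌊G⌋_{ℝ⁻}, ⌊G⌋_{ℝ⁺} }. -/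
open Filter Set Pointwise

private lemma sInf_image_div (E : Set ℝ) {t : ℝ} (ht : 0 < t) :
    sInf ((fun x => x / t) '' E) = sInf E / t := by
  have h : (fun x : ℝ => x / t) '' E = t⁻¹ • E := by
    ext x
    constructor
    · rintro ⟨y, hy, rfl⟩
      exact ⟨y, hy, by simp [smul_eq_mul]; ring⟩
    · rintro ⟨y, hy, rfl⟩
      exact ⟨y, hy, by simp [smul_eq_mul]; ring⟩
  rw [h, Real.sInf_smul_of_nonneg (inv_nonneg.2 ht.le), smul_eq_mul, div_eq_inv_mul]

private lemma fekete_s3 (f : ℝ → ℝ) (C : ℝ) (hC : 0 < C)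
    (hub : ∀ t : ℝ, 0 < t → f t ≤ C * (1 + t))
    (hlb : ∀ t : ℝ, 0 < t → -(C * (1 + t)) ≤ f t)
    (hsuper : ∀ a b : ℝ, 0 < a → 0 < b → f a + f b ≤ f (a + b)) :
    ∃ S : ℝ, Tendsto (fun t => f t / t) atTop (nhds S) ∧
      ∀ ε : ℝ, 0 < ε → ∃ K : ℝ, 0 < K ∧ ∀ a : ℝ, 0 < a → (S - ε) * a - K ≤ f a := by
  set E : Set ℝ := (fun t => f t / t) '' Ici 1 with hE
  have hne : E.Nonempty := ⟨f 1 / 1, ⟨1, mem_Ici.2 le_rfl, rfl⟩⟩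
  have hbdd : BddAbove E := by
    refine ⟨2 * C, ?_⟩
    rintro x ⟨t, ht, rfl⟩
    have ht0 : (0:ℝ) < t := lt_of_lt_of_le one_pos ht
    have h1 : f t ≤ C * (1 + t) := hub t ht0
    have h2 : C * (1 + t) ≤ 2 * C * t := by nlinarith [mem_Ici.1 ht]
    rw [div_le_iff₀ ht0]
    linarith
  set S := sSup E with hS
  have hSle : ∀ t : ℝ, 1 ≤ t → f t / t ≤ S := fun t ht => le_csSup hbdd ⟨t, ht, rfl⟩
  have key : ∀ ε : ℝ, 0 < ε → ∃ K : ℝ, 0 < K ∧ ∀ a : ℝ, 0 < a → (S - ε) * a - K ≤ f a := by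
    intro ε hε
    obtain ⟨x, ⟨t0, ht01, rfl⟩, hx⟩ := exists_lt_of_lt_csSup hne (show S - ε < S by linarith)
    have ht01 : (1:ℝ) ≤ t0 := ht01
    have ht0 : (0:ℝ) < t0 := lt_of_lt_of_le one_pos ht01
    have hf0 : (S - ε) * t0 < f t0 := (lt_div_iff₀ ht0).1 hx
    have claim : ∀ n : ℕ, ∀ a : ℝ, (n : ℝ) * t0 < a → a ≤ ((n : ℝ) + 1) * t0 →
        (n : ℝ) * f t0 - C * (1 + t0) ≤ f a := by
      intro n
      induction n with
      | zero =>
        intro a h1 h2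
        push_cast at h1 h2 ⊢
        have ha : 0 < a := by linarith
        have := hlb a ha
        nlinarith
      | succ n ih =>
        intro a h1 h2
        push_cast at h1 h2 ⊢
        have ha' : (n : ℝ) * t0 < a - t0 := by linarith
        have ha'' : a - t0 ≤ ((n : ℝ) + 1) * t0 := by linarith
        have hpos : 0 < a - t0 := by
          have : (0:ℝ) ≤ (n : ℝ) * t0 := by positivity
          linarith
        have hs := hsuper t0 (a - t0) ht0 hpos
        have heq : t0 + (a - t0) = a := by ring
        rw [heq] at hs
        have := ih (a - t0) ha' ha''
        linarith
    refine ⟨|S - ε| * t0 + C * (1 + t0) + 1, by positivity, ?_⟩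
    intro a ha
    set n : ℕ := ⌈a / t0⌉₊ - 1 with hn
    have hcpos : 1 ≤ ⌈a / t0⌉₊ := Nat.one_le_ceil_iff.2 (div_pos ha ht0)
    have hnc : (n : ℝ) = (⌈a / t0⌉₊ : ℝ) - 1 := by
      rw [hn]; push_cast [hcpos]; ring
    have h1 : (n : ℝ) * t0 < a := by
      have hlt : (⌈a / t0⌉₊ : ℝ) < a / t0 + 1 := Nat.ceil_lt_add_one (le_of_lt (div_pos ha ht0))
      have : (n : ℝ) < a / t0 := by rw [hnc]; linarith
      calc (n : ℝ) * t0 < (a / t0) * t0 := by exact (mul_lt_mul_iff_of_pos_right ht0).2 this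
        _ = a := by field_simp
    have h2 : a ≤ ((n : ℝ) + 1) * t0 := by
      have hle : a / t0 ≤ (⌈a / t0⌉₊ : ℝ) := Nat.le_ceil _
      have : a / t0 ≤ (n : ℝ) + 1 := by rw [hnc]; linarith
      calc a = (a / t0) * t0 := by field_simp
        _ ≤ ((n : ℝ) + 1) * t0 := (mul_le_mul_iff_of_pos_right ht0).2 this
    have hc := claim n a h1 h2
    have hnf : (n : ℝ) * ((S - ε) * t0) ≤ (n : ℝ) * f t0 :=
      mul_le_mul_of_nonneg_left hf0.le (Nat.cast_nonneg n)
    have habs : |(n : ℝ) * t0 - a| ≤ t0 := by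
      rw [abs_le]; constructor <;> nlinarith
    have hkey : (S - ε) * a - |S - ε| * t0 ≤ (S - ε) * ((n : ℝ) * t0) := by
      have h3 : -( |S - ε| * |(n : ℝ) * t0 - a| ) ≤ (S - ε) * ((n : ℝ) * t0 - a) := by
        rw [← abs_mul]
        exact neg_abs_le _
      have h4 : |S - ε| * |(n : ℝ) * t0 - a| ≤ |S - ε| * t0 :=
        mul_le_mul_of_nonneg_left habs (abs_nonneg _)
      nlinarith
    nlinarith
  refine ⟨S, ?_, key⟩
  rw [Metric.tendsto_atTop]
  intro δ hδ
  obtain ⟨K, hK, hKb⟩ := key (δ/3) (by linarith)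
  refine ⟨max 1 (3 * K / δ), ?_⟩
  intro t ht
  have ht1 : (1:ℝ) ≤ t := le_trans (le_max_left _ _) ht
  have ht0 : (0:ℝ) < t := lt_of_lt_of_le one_pos ht1
  have htK : 3 * K / δ ≤ t := le_trans (le_max_right _ _) ht
  have hKt : K / t ≤ δ / 3 := by
    rw [div_le_iff₀ ht0]
    rw [div_le_iff₀ hδ] at htK
    nlinarith
  have hup : f t / t ≤ S := hSle t ht1
  have hlow : S - δ/3 - K/t ≤ f t / t := by
    have h1 : (S - δ/3) * t - K ≤ f t := hKb t ht0
    have h2 : ((S - δ/3) * t - K) / t ≤ f t / t :=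
      div_le_div_of_nonneg_right h1 ht0.le
    have h3 : ((S - δ/3) * t - K) / t = S - δ/3 - K/t := by field_simp
    linarith
  rw [Real.dist_eq, abs_lt]
  constructor <;> linarith

private def gg (G : ℝ → ℝ) (t s : ℝ) : ℝ := G (s + t) - G s

private noncomputable def AA (G : ℝ → ℝ) (t : ℝ) : ℝ := ⨅ s : ℝ, gg G t s

private noncomputable def AAm (G : ℝ → ℝ) (t : ℝ) : ℝ :=
  sInf (gg G t '' {s : ℝ | s ∈ Iio (0:ℝ) ∧ s + t ∈ Iio (0:ℝ)})

private noncomputable def AAp (G : ℝ → ℝ) (t : ℝ) : ℝ :=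
  sInf (gg G t '' {s : ℝ | s ∈ Ioi (0:ℝ) ∧ s + t ∈ Ioi (0:ℝ)})

section facts

variable {G : ℝ → ℝ} {C : ℝ}
variable (hlin : ∀ t₁ t₂ : ℝ, |G t₁ - G t₂| ≤ C * (1 + |t₁ - t₂|))

include hlin

private lemma gg_bounds {t : ℝ} (ht : 0 < t) (s : ℝ) :
    -(C * (1 + t)) ≤ gg G t s ∧ gg G t s ≤ C * (1 + t) := by
  have h := hlin (s + t) s
  rw [show s + t - s = t by ring, abs_of_pos ht] at h
  exact abs_le.1 h

private lemma bddA {t : ℝ} (ht : 0 < t) : BddBelow (range (gg G t)) := by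
  refine ⟨-(C * (1 + t)), ?_⟩
  rintro x ⟨s, rfl⟩
  exact (gg_bounds hlin ht s).1

private lemma bddAm {t : ℝ} (ht : 0 < t) :
    BddBelow (gg G t '' {s : ℝ | s ∈ Iio (0:ℝ) ∧ s + t ∈ Iio (0:ℝ)}) :=
  (bddA hlin ht).mono (image_subset_range _ _)

private lemma bddAp {t : ℝ} (ht : 0 < t) :
    BddBelow (gg G t '' {s : ℝ | s ∈ Ioi (0:ℝ) ∧ s + t ∈ Ioi (0:ℝ)}) :=
  (bddA hlin ht).mono (image_subset_range _ _)

omit hlin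

private lemma neAm {t : ℝ} (ht : 0 < t) :
    (gg G t '' {s : ℝ | s ∈ Iio (0:ℝ) ∧ s + t ∈ Iio (0:ℝ)}).Nonempty :=
  ⟨gg G t (-(t+1)), ⟨-(t+1), ⟨by simp only [mem_Iio]; linarith, by simp only [mem_Iio]; linarith⟩, rfl⟩⟩

private lemma neAp {t : ℝ} (ht : 0 < t) :
    (gg G t '' {s : ℝ | s ∈ Ioi (0:ℝ) ∧ s + t ∈ Ioi (0:ℝ)}).Nonempty :=
  ⟨gg G t 1, ⟨1, ⟨by simp only [mem_Ioi]; norm_num, by simp only [mem_Ioi]; linarith⟩, rfl⟩⟩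

include hlin

private lemma AA_le {t : ℝ} (ht : 0 < t) (s : ℝ) : AA G t ≤ gg G t s :=
  ciInf_le (bddA hlin ht) s

private lemma AAm_le {t : ℝ} (ht : 0 < t) {s : ℝ} (hs : s < 0) (hst : s + t < 0) :
    AAm G t ≤ gg G t s :=
  csInf_le (bddAm hlin ht) ⟨s, ⟨by simpa using hs, by simpa using hst⟩, rfl⟩

private lemma AAp_le {t : ℝ} (ht : 0 < t) {s : ℝ} (hs : 0 < s) (hst : 0 < s + t) :
    AAp G t ≤ gg G t s :=
  csInf_le (bddAp hlin ht) ⟨s, ⟨by simpa using hs, by simpa using hst⟩, rfl⟩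

omit hlin in
private lemma gg_split (a b s : ℝ) : gg G (a + b) s = gg G a s + gg G b (s + a) := by
  unfold gg; ring_nf

private lemma AA_super {a b : ℝ} (ha : 0 < a) (hb : 0 < b) :
    AA G a + AA G b ≤ AA G (a + b) := by
  apply le_ciInf
  intro s
  have h1 := AA_le hlin ha s
  have h2 := AA_le hlin hb (s + a)
  rw [gg_split]
  linarith

private lemma AAm_super {a b : ℝ} (ha : 0 < a) (hb : 0 < b) :
    AAm G a + AAm G b ≤ AAm G (a + b) := by
  apply le_csInf (neAm (by linarith))
  rintro x ⟨s, ⟨hs1, hs2⟩, rfl⟩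
  simp only [mem_Iio] at hs1 hs2
  have h1 := AAm_le hlin ha hs1 (show s + a < 0 by linarith)
  have h2 := AAm_le hlin hb (show s + a < 0 by linarith)
    (show (s + a) + b < 0 by linarith)
  rw [gg_split]
  linarith

private lemma AAp_super {a b : ℝ} (ha : 0 < a) (hb : 0 < b) :
    AAp G a + AAp G b ≤ AAp G (a + b) := by
  apply le_csInf (neAp (by linarith))
  rintro x ⟨s, ⟨hs1, hs2⟩, rfl⟩
  simp only [mem_Ioi] at hs1 hs2
  have h1 := AAp_le hlin ha hs1 (show 0 < s + a by linarith)
  have h2 := AAp_le hlin hb (show 0 < s + a by linarith)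
    (show 0 < (s + a) + b by linarith)
  rw [gg_split]
  linarith

private lemma AA_lb {t : ℝ} (ht : 0 < t) : -(C * (1 + t)) ≤ AA G t :=
  le_ciInf fun s => (gg_bounds hlin ht s).1

private lemma AAm_lb {t : ℝ} (ht : 0 < t) : -(C * (1 + t)) ≤ AAm G t := by
  apply le_csInf (neAm ht)
  rintro x ⟨s, _, rfl⟩
  exact (gg_bounds hlin ht s).1

private lemma AAp_lb {t : ℝ} (ht : 0 < t) : -(C * (1 + t)) ≤ AAp G t := by
  apply le_csInf (neAp ht)
  rintro x ⟨s, _, rfl⟩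
  exact (gg_bounds hlin ht s).1

private lemma AA_ub {t : ℝ} (ht : 0 < t) : AA G t ≤ C * (1 + t) :=
  le_trans (AA_le hlin ht 0) (gg_bounds hlin ht 0).2

private lemma AAm_ub {t : ℝ} (ht : 0 < t) : AAm G t ≤ C * (1 + t) :=
  le_trans (AAm_le hlin ht (show -(t+1) < 0 by linarith) (show -(t+1) + t < 0 by linarith))
    (gg_bounds hlin ht _).2

private lemma AAp_ub {t : ℝ} (ht : 0 < t) : AAp G t ≤ C * (1 + t) :=
  le_trans (AAp_le hlin ht one_pos (by linarith)) (gg_bounds hlin ht _).2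

private lemma AA_le_AAm {t : ℝ} (ht : 0 < t) : AA G t ≤ AAm G t := by
  apply le_csInf (neAm ht)
  rintro x ⟨s, _, rfl⟩
  exact AA_le hlin ht s

private lemma AA_le_AAp {t : ℝ} (ht : 0 < t) : AA G t ≤ AAp G t := by
  apply le_csInf (neAp ht)
  rintro x ⟨s, _, rfl⟩
  exact AA_le hlin ht s

end facts

/-- For measurable `G : ℝ → ℝ` with sublinear increments, the least global
growth-rate over `ℝ` equals the minimum of the least global growth-rates over
`(-∞,0)` and `(0,∞)`. -/
theorem least_global_growth_rate_min
    (G : ℝ → ℝ) (hG : Measurable G) (C : ℝ) (hC : 0 < C)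
    (hlin : ∀ t₁ t₂ : ℝ, |G t₁ - G t₂| ≤ C * (1 + |t₁ - t₂|)) :
    ∃ L Lm Lp : ℝ,
      Tendsto (fun t : ℝ => ⨅ s : ℝ, (G (s + t) - G s) / t) atTop (nhds L) ∧
      Tendsto (fun t : ℝ =>
          sInf ((fun s => (G (s + t) - G s) / t) '' {s | s ∈ Iio (0:ℝ) ∧ s + t ∈ Iio (0:ℝ)}))
        atTop (nhds Lm) ∧
      Tendsto (fun t : ℝ =>
          sInf ((fun s => (G (s + t) - G s) / t) '' {s | s ∈ Ioi (0:ℝ) ∧ s + t ∈ Ioi (0:ℝ)}))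
        atTop (nhds Lp) ∧
      L = min Lm Lp := by
  clear hG
  obtain ⟨L, hLt, hLkey⟩ := fekete_s3 (AA G) C hC (fun t ht => AA_ub hlin ht)
    (fun t ht => AA_lb hlin ht) (fun a b ha hb => AA_super hlin ha hb)
  obtain ⟨Lm, hLmt, hLmkey⟩ := fekete_s3 (AAm G) C hC (fun t ht => AAm_ub hlin ht)
    (fun t ht => AAm_lb hlin ht) (fun a b ha hb => AAm_super hlin ha hb)
  obtain ⟨Lp, hLpt, hLpkey⟩ := fekete_s3 (AAp G) C hC (fun t ht => AAp_ub hlin ht)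
    (fun t ht => AAp_lb hlin ht) (fun a b ha hb => AAp_super hlin ha hb)
  -- identification of the statement's functions with `AA G t / t` etc.
  have hFeq : ∀ t : ℝ, 0 < t → (⨅ s : ℝ, (G (s + t) - G s) / t) = AA G t / t := by
    intro t ht
    have e : (⨅ s : ℝ, (G (s + t) - G s) / t) = sInf ((fun x => x / t) '' range (gg G t)) := by
      rw [← range_comp]
      exact (sInf_range).symm
    rw [e, sInf_image_div _ ht]
    unfold AA
    rw [sInf_range]
  have hFmeq : ∀ t : ℝ, 0 < t →
      sInf ((fun s => (G (s + t) - G s) / t) '' {s | s ∈ Iio (0:ℝ) ∧ s + t ∈ Iio (0:ℝ)})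
        = AAm G t / t := by
    intro t ht
    have e : (fun s : ℝ => (G (s + t) - G s) / t) '' {s | s ∈ Iio (0:ℝ) ∧ s + t ∈ Iio (0:ℝ)}
        = (fun x => x / t) '' (gg G t '' {s | s ∈ Iio (0:ℝ) ∧ s + t ∈ Iio (0:ℝ)}) :=
      image_comp (fun x => x / t) (gg G t) _
    rw [e, sInf_image_div _ ht]
    rfl
  have hFpeq : ∀ t : ℝ, 0 < t →
      sInf ((fun s => (G (s + t) - G s) / t) '' {s | s ∈ Ioi (0:ℝ) ∧ s + t ∈ Ioi (0:ℝ)})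
        = AAp G t / t := by
    intro t ht
    have e : (fun s : ℝ => (G (s + t) - G s) / t) '' {s | s ∈ Ioi (0:ℝ) ∧ s + t ∈ Ioi (0:ℝ)}
        = (fun x => x / t) '' (gg G t '' {s | s ∈ Ioi (0:ℝ) ∧ s + t ∈ Ioi (0:ℝ)}) :=
      image_comp (fun x => x / t) (gg G t) _
    rw [e, sInf_image_div _ ht]
    rfl
  refine ⟨L, Lm, Lp, ?_, ?_, ?_, ?_⟩
  · refine Tendsto.congr' ?_ hLt
    filter_upwards [eventually_gt_atTop (0:ℝ)] with t ht
    exact (hFeq t ht).symm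
  · refine Tendsto.congr' ?_ hLmt
    filter_upwards [eventually_gt_atTop (0:ℝ)] with t ht
    exact (hFmeq t ht).symm
  · refine Tendsto.congr' ?_ hLpt
    filter_upwards [eventually_gt_atTop (0:ℝ)] with t ht
    exact (hFpeq t ht).symm
  -- the minimum identity
  have hLLm : L ≤ Lm := by
    apply le_of_tendsto_of_tendsto hLt hLmt
    filter_upwards [eventually_gt_atTop (0:ℝ)] with t ht
    exact div_le_div_of_nonneg_right (AA_le_AAm hlin ht) ht.le
  have hLLp : L ≤ Lp := by
    apply le_of_tendsto_of_tendsto hLt hLpt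
    filter_upwards [eventually_gt_atTop (0:ℝ)] with t ht
    exact div_le_div_of_nonneg_right (AA_le_AAp hlin ht) ht.le
  have hmL : min Lm Lp ≤ L := by
    refine le_of_forall_pos_le_add ?_
    intro ε hε
    obtain ⟨Km, hKm, hKmb⟩ := hLmkey ε hε
    obtain ⟨Kp, hKp, hKpb⟩ := hLpkey ε hε
    set c : ℝ := min Lm Lp - ε with hc
    have hcm : c ≤ Lm - ε := sub_le_sub_right (min_le_left _ _) ε
    have hcp : c ≤ Lp - ε := sub_le_sub_right (min_le_right _ _) ε
    set K : ℝ := Km + Kp + 4 * C + 3 * |c| + 1 with hK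
    have habs : 0 ≤ |c| := abs_nonneg c
    have hmain : ∀ t : ℝ, 4 < t → c * t - K ≤ AA G t := by
      intro t ht4
      have ht0 : (0:ℝ) < t := by linarith
      apply le_ciInf
      intro s
      rcases lt_or_ge 0 s with hs | hs
      · have h1 : AAp G t ≤ gg G t s := AAp_le hlin ht0 hs (by linarith)
        have h2 := hKpb t ht0
        have h3 : c * t ≤ (Lp - ε) * t := mul_le_mul_of_nonneg_right hcp ht0.le
        linarith
      rcases lt_or_ge (s + t) 0 with hst | hst
      · have h1 : AAm G t ≤ gg G t s := AAm_le hlin ht0 (by linarith) hst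
        have h2 := hKmb t ht0
        have h3 : c * t ≤ (Lm - ε) * t := mul_le_mul_of_nonneg_right hcm ht0.le
        linarith
      rcases le_or_gt (-2) s with ha2 | ha2
      · -- s ∈ [-2, 0], so s + t > 2 : split at the point 1
        have hb2 : 2 < s + t := by linarith
        have h1 : AAp G (s + t - 1) ≤ G (s + t) - G 1 := by
          have h := AAp_le hlin (show (0:ℝ) < s + t - 1 by linarith)
            (show (0:ℝ) < 1 by norm_num) (show (0:ℝ) < 1 + (s + t - 1) by linarith)
          unfold gg at h
          rwa [show (1:ℝ) + (s + t - 1) = s + t by ring] at h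
        have h2 := hKpb (s + t - 1) (by linarith)
        have h3 : |G 1 - G s| ≤ C * (1 + |1 - s|) := hlin 1 s
        have h4 : |1 - s| ≤ 3 := by rw [abs_le]; constructor <;> linarith
        have h5 : -(4 * C) ≤ G 1 - G s := by
          have h6 := (abs_le.1 h3).1
          nlinarith
        have h7 : c * (s + t - 1) ≤ (Lp - ε) * (s + t - 1) :=
          mul_le_mul_of_nonneg_right hcp (by linarith)
        have h8 : -(3 * |c|) ≤ c * (s - 1) := by
          have h9 : -|c * (s - 1)| ≤ c * (s - 1) := neg_abs_le _
          have h10 : |c * (s - 1)| = |c| * |s - 1| := abs_mul _ _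
          have h11 : |s - 1| ≤ 3 := by rw [abs_le]; constructor <;> linarith
          nlinarith
        have hgg : gg G t s = (G (s + t) - G 1) + (G 1 - G s) := by unfold gg; ring
        rw [hgg]
        have h12 : c * (s + t - 1) = c * t + c * (s - 1) := by ring
        linarith
      rcases le_or_gt (s + t) 2 with hb2 | hb2
      · -- s + t ∈ [0, 2], so s < -2 : split at the point -1
        have h1 : AAm G (-1 - s) ≤ G (-1) - G s := by
          have h := AAm_le hlin (show (0:ℝ) < -1 - s by linarith)
            (show s < 0 by linarith) (show s + (-1 - s) < 0 by linarith)
          unfold gg at h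
          rwa [show s + (-1 - s) = (-1:ℝ) by ring] at h
        have h2 := hKmb (-1 - s) (by linarith)
        have h3 : |G (s + t) - G (-1)| ≤ C * (1 + |s + t - (-1)|) := hlin (s + t) (-1)
        have h4 : |s + t - (-1)| ≤ 3 := by rw [abs_le]; constructor <;> linarith
        have h5 : -(4 * C) ≤ G (s + t) - G (-1) := by
          have h6 := (abs_le.1 h3).1
          nlinarith
        have h7 : c * (-1 - s) ≤ (Lm - ε) * (-1 - s) :=
          mul_le_mul_of_nonneg_right hcm (by linarith)
        have h8 : -(3 * |c|) ≤ c * (-1 - s - t) := by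
          have h9 : -|c * (-1 - s - t)| ≤ c * (-1 - s - t) := neg_abs_le _
          have h10 : |c * (-1 - s - t)| = |c| * |(-1 - s - t)| := abs_mul _ _
          have h11 : |(-1 - s - t)| ≤ 3 := by rw [abs_le]; constructor <;> linarith
          nlinarith
        have hgg : gg G t s = (G (s + t) - G (-1)) + (G (-1) - G s) := by unfold gg; ring
        rw [hgg]
        have h12 : c * (-1 - s) = c * t + c * (-1 - s - t) := by ring
        linarith
      · -- s < -2 and s + t > 2 : split at the points -1 and 1
        have h1 : AAp G (s + t - 1) ≤ G (s + t) - G 1 := by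
          have h := AAp_le hlin (show (0:ℝ) < s + t - 1 by linarith)
            (show (0:ℝ) < 1 by norm_num) (show (0:ℝ) < 1 + (s + t - 1) by linarith)
          unfold gg at h
          rwa [show (1:ℝ) + (s + t - 1) = s + t by ring] at h
        have h1' : AAm G (-1 - s) ≤ G (-1) - G s := by
          have h := AAm_le hlin (show (0:ℝ) < -1 - s by linarith)
            (show s < 0 by linarith) (show s + (-1 - s) < 0 by linarith)
          unfold gg at h
          rwa [show s + (-1 - s) = (-1:ℝ) by ring] at h
        have h2 := hKpb (s + t - 1) (by linarith)
        have h2' := hKmb (-1 - s) (by linarith)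
        have h3 : |G 1 - G (-1)| ≤ C * (1 + |(1:ℝ) - (-1)|) := hlin 1 (-1)
        rw [show |(1:ℝ) - (-1)| = 2 by norm_num] at h3
        have h4 : -(3 * C) ≤ G 1 - G (-1) := by
          have h6 := (abs_le.1 h3).1
          linarith
        have h7 : c * (s + t - 1) ≤ (Lp - ε) * (s + t - 1) :=
          mul_le_mul_of_nonneg_right hcp (by linarith)
        have h7' : c * (-1 - s) ≤ (Lm - ε) * (-1 - s) :=
          mul_le_mul_of_nonneg_right hcm (by linarith)
        have hgg : gg G t s = (G (s + t) - G 1) + (G 1 - G (-1)) + (G (-1) - G s) := by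
          unfold gg; ring
        rw [hgg]
        have h12 : c * (s + t - 1) + c * (-1 - s) = c * t + c * (-2) := by ring
        have h13 : c ≤ |c| := le_abs_self c
        linarith
    have hev : ∀ᶠ t in atTop, c - K / t ≤ AA G t / t := by
      filter_upwards [eventually_gt_atTop (4:ℝ)] with t ht
      have ht0 : (0:ℝ) < t := by linarith
      have h1 := hmain t ht
      have h2 : (c * t - K) / t ≤ AA G t / t := div_le_div_of_nonneg_right h1 ht0.le
      have h3 : (c * t - K) / t = c - K / t := by field_simp
      linarith
    have hct : Tendsto (fun t : ℝ => c - K / t) atTop (nhds c) := by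
      have h1 : Tendsto (fun t : ℝ => K / t) atTop (nhds 0) :=
        Tendsto.div_atTop tendsto_const_nhds tendsto_id
      have h2 := (tendsto_const_nhds (α := ℝ) (x := c)).sub h1
      simpa using h2
    have hcl : c ≤ L := le_of_tendsto_of_tendsto hct hLt hev
    rw [hc] at hcl
    linarith
  exact le_antisymm (le_min hLLm hLLp) hmL
end

section
/- Let G : (0,∞) → ℝ be measurable with |G(t₁) - G(t₂)| ≤ C(1 + |t₁ - t₂|). Then limsup_{t→+∞} G(t)/t ≤ ⌈G⌉_{ℝ⁺} and liminf_{t→+∞} G(t)/t ≥ ⌊G⌋_{ℝ⁺}. -/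
open Filter Set

set_option maxHeartbeats 1000000
open Filter Set

lemma mySSup_div_image (A : Set ℝ) (hA : A.Nonempty) (hb : BddAbove A) {t : ℝ} (ht : 0 < t) :
    sSup ((fun x => x / t) '' A) = sSup A / t := by
  obtain ⟨u, hu⟩ := hb
  have hbi : BddAbove ((fun x => x / t) '' A) := by
    refine ⟨u / t, ?_⟩
    rintro y ⟨x, hx, rfl⟩
    exact (div_le_div_iff_of_pos_right ht).2 (hu hx)
  apply le_antisymm
  · apply csSup_le (hA.image _)
    rintro y ⟨x, hx, rfl⟩
    exact (div_le_div_iff_of_pos_right ht).2 (le_csSup ⟨u, hu⟩ hx)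
  · rw [div_le_iff₀ ht]
    apply csSup_le hA
    intro x hx
    have h1 : x / t ≤ sSup ((fun x => x / t) '' A) := le_csSup hbi ⟨x, hx, rfl⟩
    exact (div_le_iff₀ ht).1 h1

lemma mySInf_div_image (A : Set ℝ) (hA : A.Nonempty) (hb : BddBelow A) {t : ℝ} (ht : 0 < t) :
    sInf ((fun x => x / t) '' A) = sInf A / t := by
  obtain ⟨u, hu⟩ := hb
  have hbi : BddBelow ((fun x => x / t) '' A) := by
    refine ⟨u / t, ?_⟩
    rintro y ⟨x, hx, rfl⟩
    exact (div_le_div_iff_of_pos_right ht).2 (hu hx)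
  apply le_antisymm
  · rw [le_div_iff₀ ht]
    apply le_csInf hA
    intro x hx
    have h1 : sInf ((fun x => x / t) '' A) ≤ x / t := csInf_le hbi ⟨x, hx, rfl⟩
    exact (le_div_iff₀ ht).1 h1
  · apply le_csInf (hA.image _)
    rintro y ⟨x, hx, rfl⟩
    exact (div_le_div_iff_of_pos_right ht).2 (csInf_le ⟨u, hu⟩ hx)

lemma myFeketeAux (f : ℝ → ℝ) (T : ℝ) (hT : 1 ≤ T)
    (hsub : ∀ a b : ℝ, 1 ≤ a → 1 ≤ b → f (a + b) ≤ f a + f b) :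
    ∀ n : ℕ, ∀ r : ℝ, 1 ≤ r → f (n * T + r) ≤ n * f T + f r := by
  intro n
  induction n with
  | zero => intro r hr; simp
  | succ n ih =>
    intro r hr
    have h1 : ((n + 1 : ℕ) : ℝ) * T + r = (n : ℝ) * T + (T + r) := by push_cast; ring
    rw [h1]
    have h2 := ih (T + r) (by linarith)
    have h3 := hsub T r hT hr
    push_cast
    linarith

lemma myFekete (f : ℝ → ℝ) (B : ℝ)
    (hsub : ∀ a b : ℝ, 1 ≤ a → 1 ≤ b → f (a + b) ≤ f a + f b)
    (hbd : ∀ t : ℝ, 1 ≤ t → |f t| ≤ B * t) :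
    ∃ L, Tendsto (fun t => f t / t) atTop (nhds L) := by
  have hB : 0 ≤ B := le_trans (abs_nonneg (f 1)) (by simpa using hbd 1 le_rfl)
  set S : Set ℝ := (fun t => f t / t) '' Ici 1 with hS
  have hSne : S.Nonempty := ⟨f 1 / 1, 1, mem_Ici.2 le_rfl, rfl⟩
  have hlow : ∀ t : ℝ, 1 ≤ t → -B ≤ f t / t := by
    intro t ht
    have ht0 : 0 < t := lt_of_lt_of_le one_pos ht
    have h1 := (abs_le.mp (hbd t ht)).1
    rw [le_div_iff₀ ht0]
    nlinarith
  have hSbdd : BddBelow S := ⟨-B, by rintro x ⟨t, ht, rfl⟩; exact hlow t ht⟩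
  set L := sInf S with hL
  refine ⟨L, Metric.tendsto_atTop.2 ?_⟩
  intro ε hε
  have hεL : L < L + ε / 2 := lt_add_of_pos_right L (half_pos hε)
  obtain ⟨x, ⟨T, hTmem, rfl⟩, hx⟩ := exists_lt_of_csInf_lt hSne hεL
  have hT : (1:ℝ) ≤ T := mem_Ici.1 hTmem
  have hT0 : 0 < T := lt_of_lt_of_le one_pos hT
  set M : ℝ := 2 * |f T| + 2 * B * T with hMdef
  have hM : 0 ≤ M := by positivity
  refine ⟨max (2 * T) (2 * M / ε + 1), fun t ht => ?_⟩
  have ht2T : 2 * T ≤ t := le_trans (le_max_left _ _) ht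
  have htM : 2 * M / ε + 1 ≤ t := le_trans (le_max_right _ _) ht
  have ht1 : 1 ≤ t := by linarith
  have ht0 : 0 < t := by linarith
  -- floor setup
  have hdiv2 : 2 ≤ t / T := by rw [le_div_iff₀ hT0]; linarith
  have hdiv0 : 0 ≤ t / T := by linarith
  have hfl2 : 2 ≤ ⌊t / T⌋₊ := Nat.le_floor (by exact_mod_cast hdiv2)
  set n : ℕ := ⌊t / T⌋₊ - 1 with hn
  have hncast : (n : ℝ) = (⌊t / T⌋₊ : ℝ) - 1 := by
    have : 1 ≤ ⌊t / T⌋₊ := le_trans (by norm_num) hfl2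
    rw [hn]; push_cast [Nat.cast_sub this]
    ring
  have hfl_le : (⌊t / T⌋₊ : ℝ) ≤ t / T := Nat.floor_le hdiv0
  have hfl_gt : t / T < (⌊t / T⌋₊ : ℝ) + 1 := Nat.lt_floor_add_one _
  have hn_le : (n : ℝ) ≤ t / T - 1 := by rw [hncast]; linarith
  have hn_gt : t / T - 2 ≤ (n : ℝ) := by rw [hncast]; linarith
  set r : ℝ := t - n * T with hr
  have hr1 : T ≤ r := by
    have : (n : ℝ) * T ≤ (t / T - 1) * T := by
      apply mul_le_mul_of_nonneg_right hn_le (le_of_lt hT0)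
    have h2 : (t / T - 1) * T = t - T := by field_simp
    rw [hr]; nlinarith
  have hr2 : r ≤ 2 * T := by
    have : (t / T - 2) * T ≤ (n : ℝ) * T := by
      apply mul_le_mul_of_nonneg_right hn_gt (le_of_lt hT0)
    have h2 : (t / T - 2) * T = t - 2 * T := by field_simp
    rw [hr]; nlinarith
  have hr1' : 1 ≤ r := le_trans hT hr1
  have hkey : f t ≤ (n : ℝ) * f T + f r := by
    have := myFeketeAux f T hT hsub n r hr1'
    have ht_eq : (n : ℝ) * T + r = t := by rw [hr]; ring
    rwa [ht_eq] at this
  -- n * f T ≤ (t/T) * f T + 2 * |f T|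
  have hstep1 : (n : ℝ) * f T ≤ (t / T) * f T + 2 * |f T| := by
    rcases le_or_gt 0 (f T) with h | h
    · have h1 : (n : ℝ) * f T ≤ (t / T) * f T :=
        mul_le_mul_of_nonneg_right (by linarith) h
      have := abs_nonneg (f T)
      linarith
    · have h1 : (n : ℝ) * f T ≤ (t / T - 2) * f T :=
        mul_le_mul_of_nonpos_right hn_gt h.le
      have habs : |f T| = -f T := abs_of_neg h
      nlinarith
  have hfr : f r ≤ 2 * B * T := by
    have h1 : f r ≤ B * r := le_trans (le_abs_self _) (hbd r hr1')
    have h2 : B * r ≤ B * (2 * T) := mul_le_mul_of_nonneg_left hr2 hB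
    linarith
  have hft : f t ≤ (t / T) * f T + M := by rw [hMdef]; linarith
  have hdivT : (t / T) * f T / t = f T / T := by field_simp
  have hupper : f t / t < L + ε := by
    have h1 : f t / t ≤ ((t / T) * f T + M) / t := (div_le_div_iff_of_pos_right ht0).2 hft
    have h2 : ((t / T) * f T + M) / t = f T / T + M / t := by
      rw [add_div, hdivT]
    have h3 : M / t < ε / 2 := by
      rw [div_lt_iff₀ ht0]
      have h4 : ε * (2 * M / ε + 1) = 2 * M + ε := by field_simp
      have h5 : ε * (2 * M / ε + 1) ≤ ε * t := mul_le_mul_of_nonneg_left htM hε.le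
      nlinarith
    have h5 : f T / T < L + ε / 2 := hx
    calc f t / t ≤ f T / T + M / t := by rw [← h2]; exact h1
      _ < L + ε / 2 + ε / 2 := by linarith
      _ = L + ε := by ring
  have hlower : L ≤ f t / t := csInf_le hSbdd ⟨t, mem_Ici.2 ht1, rfl⟩
  rw [Real.dist_eq, abs_sub_lt_iff]
  constructor <;> linarith

lemma myShiftTendsto (f : ℝ → ℝ) (c L : ℝ)
    (hf : Tendsto (fun u => f u / u) atTop (nhds L)) :
    Tendsto (fun t => (f (t - 1) + c) / t) atTop (nhds L) := by
  have h0 : Tendsto (fun t : ℝ => t + -1) atTop atTop :=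
    tendsto_atTop_add_const_right atTop (-1) tendsto_id
  have h1 : Tendsto (fun t : ℝ => f (t - 1) / (t - 1)) atTop (nhds L) :=
    (hf.comp h0).congr fun t => by rw [Function.comp_apply, ← sub_eq_add_neg]
  have h2 : Tendsto (fun t : ℝ => (t - 1) / t) atTop (nhds 1) := by
    have h3 : Tendsto (fun t : ℝ => 1 - t⁻¹) atTop (nhds (1 - 0)) :=
      tendsto_const_nhds.sub tendsto_inv_atTop_zero
    rw [sub_zero] at h3
    refine h3.congr' ?_
    filter_upwards [eventually_gt_atTop (0 : ℝ)] with t ht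
    field_simp
  have h4 : Tendsto (fun t : ℝ => c / t) atTop (nhds 0) :=
    tendsto_const_nhds.div_atTop tendsto_id
  have h5 := (h1.mul h2).add h4
  rw [mul_one, add_zero] at h5
  refine h5.congr' ?_
  filter_upwards [eventually_gt_atTop (1 : ℝ)] with t ht
  have ht0 : t ≠ 0 := by intro hh; rw [hh] at ht; linarith
  have ht1 : t - 1 ≠ 0 := by intro hh; nlinarith
  field_simp



/-- For measurable `G : (0,∞) → ℝ` with sublinear increments,
`limsup_{t→+∞} G(t)/t ≤ ⌈G⌉_{ℝ⁺}` and `liminf_{t→+∞} G(t)/t ≥ ⌊G⌋_{ℝ⁺}`,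
where `⌊G⌋_{ℝ⁺} = lim_{t→∞} inf_{s≥0} (G(s+t)-G(s))/t` and
`⌈G⌉_{ℝ⁺} = lim_{t→∞} sup_{s≥0} (G(s+t)-G(s))/t`. -/
theorem asymptotic_slope_between_growth_rates
    (G : ℝ → ℝ) (hG : Measurable G) (C : ℝ) (hC : 0 < C)
    (hlin : ∀ t₁ ∈ Ioi (0:ℝ), ∀ t₂ ∈ Ioi (0:ℝ), |G t₁ - G t₂| ≤ C * (1 + |t₁ - t₂|)) :
    ∃ Lm Lp : ℝ,
      Tendsto (fun t : ℝ => sInf ((fun s => (G (s + t) - G s) / t) '' Ici (0:ℝ)))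
        atTop (nhds Lm) ∧
      Tendsto (fun t : ℝ => sSup ((fun s => (G (s + t) - G s) / t) '' Ici (0:ℝ)))
        atTop (nhds Lp) ∧
      limsup (fun t : ℝ => G t / t) atTop ≤ Lp ∧
      Lm ≤ liminf (fun t : ℝ => G t / t) atTop := by
  -- the raw increment sup/inf
  set g : ℝ → ℝ := fun u => sSup ((fun s => G (s + u) - G s) '' Ici 0) with hgdef
  set h : ℝ → ℝ := fun u => sInf ((fun s => G (s + u) - G s) '' Ici 0) with hhdef
  set D : ℝ := |G 1 - G 0| with hDdef
  have hD : 0 ≤ D := abs_nonneg _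
  -- uniform bound on increments
  have key : ∀ u : ℝ, 0 < u → ∀ s : ℝ, 0 ≤ s →
      |G (s + u) - G s| ≤ C * (1 + u) + |G u - G 0| := by
    intro u hu s hs
    rcases eq_or_lt_of_le hs with rfl | hs'
    · have h1 : 0 ≤ C * (1 + u) := by positivity
      rw [zero_add]
      linarith [le_abs_self (G u - G 0), abs_le_abs (le_refl (G u - G 0))]
    · have h1 := hlin (s + u) (by simp [mem_Ioi]; linarith) s (mem_Ioi.2 hs')
      have h2 : |s + u - s| = u := by rw [show s + u - s = u by ring, abs_of_pos hu]
      rw [h2] at h1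
      linarith [abs_nonneg (G u - G 0)]
  have hne : ∀ u : ℝ, ((fun s => G (s + u) - G s) '' Ici 0).Nonempty :=
    fun u => ⟨G (0 + u) - G 0, 0, mem_Ici.2 le_rfl, rfl⟩
  have hba : ∀ u : ℝ, 0 < u → BddAbove ((fun s => G (s + u) - G s) '' Ici 0) := by
    intro u hu
    refine ⟨C * (1 + u) + |G u - G 0|, ?_⟩
    rintro x ⟨s, hs, rfl⟩
    exact le_trans (le_abs_self _) (key u hu s hs)
  have hbb : ∀ u : ℝ, 0 < u → BddBelow ((fun s => G (s + u) - G s) '' Ici 0) := by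
    intro u hu
    refine ⟨-(C * (1 + u) + |G u - G 0|), ?_⟩
    rintro x ⟨s, hs, rfl⟩
    exact le_trans (neg_le_neg (key u hu s hs)) (neg_abs_le _)
  -- subadditivity of g, superadditivity of h
  have hg_sub : ∀ a b : ℝ, 0 < a → 0 < b → g (a + b) ≤ g a + g b := by
    intro a b ha hb
    apply csSup_le (hne _)
    rintro x ⟨s, hs, rfl⟩
    have hs' : (0:ℝ) ≤ s := mem_Ici.1 hs
    have h1 : G ((s + a) + b) - G (s + a) ≤ g b :=
      le_csSup (hba b hb) ⟨s + a, mem_Ici.2 (by linarith), rfl⟩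
    have h2 : G (s + a) - G s ≤ g a := le_csSup (hba a ha) ⟨s, hs, rfl⟩
    show G (s + (a + b)) - G s ≤ g a + g b
    have h3 : s + (a + b) = (s + a) + b := by ring
    rw [h3]
    linarith
  have hh_sub : ∀ a b : ℝ, 0 < a → 0 < b → h a + h b ≤ h (a + b) := by
    intro a b ha hb
    apply le_csInf (hne _)
    rintro x ⟨s, hs, rfl⟩
    have hs' : (0:ℝ) ≤ s := mem_Ici.1 hs
    have h1 : h b ≤ G ((s + a) + b) - G (s + a) :=
      csInf_le (hbb b hb) ⟨s + a, mem_Ici.2 (by linarith), rfl⟩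
    have h2 : h a ≤ G (s + a) - G s := csInf_le (hbb a ha) ⟨s, hs, rfl⟩
    show h a + h b ≤ G (s + (a + b)) - G s
    have h3 : s + (a + b) = (s + a) + b := by ring
    rw [h3]
    linarith
  -- bound |G u - G 0| for u ≥ 1
  have habs0 : ∀ u : ℝ, 1 ≤ u → |G u - G 0| ≤ C * (1 + u) + D := by
    intro u hu
    have hu0 : (0:ℝ) < u := by linarith
    have h1 := hlin u (mem_Ioi.2 hu0) 1 (mem_Ioi.2 one_pos)
    have h2 : |u - 1| = u - 1 := abs_of_nonneg (by linarith)
    rw [h2] at h1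
    calc |G u - G 0| ≤ |G u - G 1| + |G 1 - G 0| := by
          have : G u - G 0 = (G u - G 1) + (G 1 - G 0) := by ring
          rw [this]; exact abs_add_le _ _
      _ ≤ C * (1 + (u - 1)) + D := by rw [hDdef]; linarith
      _ ≤ C * (1 + u) + D := by nlinarith
  set B : ℝ := 4 * C + D with hBdef
  have hgB : ∀ u : ℝ, 1 ≤ u → |g u| ≤ B * u := by
    intro u hu
    have hu0 : (0:ℝ) < u := by linarith
    rw [abs_le]
    constructor
    · -- lower bound: g u ≥ G (1+u) - G 1 ≥ -C(1+u)
      have h1 : G (1 + u) - G 1 ≤ g u :=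
        le_csSup (hba u hu0) ⟨1, mem_Ici.2 zero_le_one, rfl⟩
      have h2 := hlin (1 + u) (by simp [mem_Ioi]; linarith) 1 (mem_Ioi.2 one_pos)
      have h3 : |1 + u - 1| = u := by rw [show (1:ℝ) + u - 1 = u by ring, abs_of_pos hu0]
      rw [h3] at h2
      have h4 := (abs_le.mp h2).1
      nlinarith
    · apply csSup_le (hne u)
      rintro x ⟨s, hs, rfl⟩
      have h1 := le_trans (le_abs_self _) (key u hu0 s (mem_Ici.1 hs))
      have h2 := habs0 u hu
      show G (s + u) - G s ≤ B * u
      rw [hBdef]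
      nlinarith [mul_nonneg hC.le (by linarith : (0:ℝ) ≤ u - 1),
        mul_nonneg hD (by linarith : (0:ℝ) ≤ u - 1)]
  have hhB : ∀ u : ℝ, 1 ≤ u → |h u| ≤ B * u := by
    intro u hu
    have hu0 : (0:ℝ) < u := by linarith
    rw [abs_le]
    constructor
    · apply le_csInf (hne u)
      rintro x ⟨s, hs, rfl⟩
      have h1 := le_trans (neg_le_neg (key u hu0 s (mem_Ici.1 hs))) (neg_abs_le _)
      have h2 := habs0 u hu
      show -(B * u) ≤ G (s + u) - G s
      rw [hBdef]
      nlinarith [mul_nonneg hC.le (by linarith : (0:ℝ) ≤ u - 1),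
        mul_nonneg hD (by linarith : (0:ℝ) ≤ u - 1)]
    · have h1 : h u ≤ G (1 + u) - G 1 :=
        csInf_le (hbb u hu0) ⟨1, mem_Ici.2 zero_le_one, rfl⟩
      have h2 := hlin (1 + u) (by simp [mem_Ioi]; linarith) 1 (mem_Ioi.2 one_pos)
      have h3 : |1 + u - 1| = u := by rw [show (1:ℝ) + u - 1 = u by ring, abs_of_pos hu0]
      rw [h3] at h2
      have h4 := (abs_le.mp h2).2
      nlinarith
  -- apply Fekete
  obtain ⟨Lp, hLp⟩ := myFekete g B
    (fun a b ha hb => hg_sub a b (by linarith) (by linarith)) hgB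
  obtain ⟨M, hM⟩ := myFekete (fun u => -(h u)) B
    (fun a b ha hb => by
      have := hh_sub a b (by linarith) (by linarith)
      linarith)
    (fun t ht => by rw [abs_neg]; exact hhB t ht)
  have hLm : Tendsto (fun u => h u / u) atTop (nhds (-M)) := by
    have h1 : Tendsto (fun u => -(-(h u) / u)) atTop (nhds (-M)) := hM.neg
    refine h1.congr fun u => ?_
    rw [neg_div, neg_neg]
  refine ⟨-M, Lp, ?_, ?_, ?_, ?_⟩
  · -- tendsto of sInf statement
    have heq : ∀ᶠ t in atTop,
        h t / t = sInf ((fun s => (G (s + t) - G s) / t) '' Ici (0:ℝ)) := by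
      filter_upwards [eventually_gt_atTop (0:ℝ)] with t ht
      have himg : ((fun s => (G (s + t) - G s) / t) '' Ici (0:ℝ)) =
          (fun x => x / t) '' ((fun s => G (s + t) - G s) '' Ici (0:ℝ)) := by
        rw [← Set.image_comp]; rfl
      rw [himg, mySInf_div_image _ (hne t) (hbb t ht) ht]
    exact hLm.congr' heq
  · have heq : ∀ᶠ t in atTop,
        g t / t = sSup ((fun s => (G (s + t) - G s) / t) '' Ici (0:ℝ)) := by
      filter_upwards [eventually_gt_atTop (0:ℝ)] with t ht
      have himg : ((fun s => (G (s + t) - G s) / t) '' Ici (0:ℝ)) =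
          (fun x => x / t) '' ((fun s => G (s + t) - G s) '' Ici (0:ℝ)) := by
        rw [← Set.image_comp]; rfl
      rw [himg, mySSup_div_image _ (hne t) (hba t ht) ht]
    exact hLp.congr' heq
  · -- limsup comparison
    have hu := myShiftTendsto g (G 1) Lp hLp
    have hle : (fun t => G t / t) ≤ᶠ[atTop] fun t => (g (t - 1) + G 1) / t := by
      filter_upwards [eventually_gt_atTop (1 : ℝ)] with t ht
      have ht1 : (0 : ℝ) < t - 1 := by linarith
      have h1 : G (1 + (t - 1)) - G 1 ≤ g (t - 1) :=
        le_csSup (hba _ ht1) ⟨1, mem_Ici.2 zero_le_one, rfl⟩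
      rw [show (1 : ℝ) + (t - 1) = t by ring] at h1
      exact (div_le_div_iff_of_pos_right (by linarith)).2 (by linarith)
    have hlowbd : ∀ᶠ t in atTop, -(|G 1| + C) ≤ G t / t := by
      filter_upwards [eventually_ge_atTop (1 : ℝ)] with t ht
      have ht0 : (0 : ℝ) < t := by linarith
      have h1 := hlin t (mem_Ioi.2 ht0) 1 (mem_Ioi.2 one_pos)
      have h2 : C * (1 + |t - 1|) = C * t := by
        rw [abs_of_nonneg (by linarith : (0:ℝ) ≤ t - 1)]; ring
      rw [h2] at h1
      have h3 := (abs_le.mp h1).1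
      rw [le_div_iff₀ ht0]
      nlinarith [neg_abs_le (G 1), mul_nonneg (abs_nonneg (G 1)) (by linarith : (0:ℝ) ≤ t - 1)]
    have hGcob : IsCoboundedUnder (· ≤ ·) atTop (fun t : ℝ => G t / t) :=
      isCoboundedUnder_le_of_eventually_le atTop hlowbd
    calc limsup (fun t : ℝ => G t / t) atTop
        ≤ limsup (fun t : ℝ => (g (t - 1) + G 1) / t) atTop :=
          limsup_le_limsup hle hGcob hu.isBoundedUnder_le
      _ = Lp := hu.limsup_eq
  · -- liminf comparison
    have hv := myShiftTendsto h (G 1) (-M) hLm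
    have hge : (fun t => (h (t - 1) + G 1) / t) ≤ᶠ[atTop] fun t : ℝ => G t / t := by
      filter_upwards [eventually_gt_atTop (1 : ℝ)] with t ht
      have ht1 : (0 : ℝ) < t - 1 := by linarith
      have h1 : h (t - 1) ≤ G (1 + (t - 1)) - G 1 :=
        csInf_le (hbb _ ht1) ⟨1, mem_Ici.2 zero_le_one, rfl⟩
      rw [show (1 : ℝ) + (t - 1) = t by ring] at h1
      exact (div_le_div_iff_of_pos_right (by linarith)).2 (by linarith)
    have hupbd : ∀ᶠ t in atTop, G t / t ≤ |G 1| + C := by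
      filter_upwards [eventually_ge_atTop (1 : ℝ)] with t ht
      have ht0 : (0 : ℝ) < t := by linarith
      have h1 := hlin t (mem_Ioi.2 ht0) 1 (mem_Ioi.2 one_pos)
      have h2 : C * (1 + |t - 1|) = C * t := by
        rw [abs_of_nonneg (by linarith : (0:ℝ) ≤ t - 1)]; ring
      rw [h2] at h1
      have h3 := (abs_le.mp h1).2
      rw [div_le_iff₀ ht0]
      nlinarith [le_abs_self (G 1), mul_nonneg (abs_nonneg (G 1)) (by linarith : (0:ℝ) ≤ t - 1)]
    have hGcob : IsCoboundedUnder (· ≥ ·) atTop (fun t : ℝ => G t / t) :=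
      isCoboundedUnder_ge_of_eventually_le atTop hupbd
    calc (-M : ℝ) = liminf (fun t : ℝ => (h (t - 1) + G 1) / t) atTop := hv.liminf_eq.symm
      _ ≤ liminf (fun t : ℝ => G t / t) atTop :=
          liminf_le_liminf hge hv.isBoundedUnder_ge hGcob
end

section
/- Let g ∈ L^∞(ℝ). Then the least mean ⟨g⟩ := lim_{t→+∞} inf_{s∈ℝ} (1/t) ∫_s^{s+t} g(τ) dτ exists, and ⟨g⟩ = sup_{B ∈ W^{1,∞}(ℝ)} essinf_ℝ (g + B'). -/
open Filter MeasureTheory Metric Set Topology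

lemma bdd_intervalIntegrable {g : ℝ → ℝ} {M : ℝ} (hmeas : Measurable g)
    (hbdd : ∀ t, |g t| ≤ M) (a b : ℝ) : IntervalIntegrable g volume a b := by
  rw [intervalIntegrable_iff]
  exact Measure.integrableOn_of_bounded measure_Ioc_lt_top.ne
    hmeas.aestronglyMeasurable (ae_of_all _ fun x => by simpa using hbdd x)

lemma abs_le_of_hasDerivAt_lipschitz {f : ℝ → ℝ} {K : NNReal} (hf : LipschitzWith K f)
    {x d : ℝ} (h : HasDerivAt f d x) : |d| ≤ K := by
  rw [hasDerivAt_iff_tendsto_slope] at h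
  apply le_of_tendsto h.abs
  filter_upwards [self_mem_nhdsWithin] with y hy
  rw [slope_def_field, abs_div]
  rw [div_le_iff₀ (by simp [sub_ne_zero.2 (Set.mem_compl_singleton_iff.mp hy)])]
  have := hf.dist_le_mul y x
  simpa [Real.dist_eq, abs_sub_comm, mul_comm] using this

lemma nonneg_of_hasDerivAt_monotone {f : ℝ → ℝ} (hf : Monotone f) {x d : ℝ}
    (h : HasDerivAt f d x) : 0 ≤ d := by
  rw [hasDerivAt_iff_tendsto_slope] at h
  apply le_of_tendsto_of_tendsto' tendsto_const_nhds h
  intro y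
  rw [slope_def_field]
  rcases lt_trichotomy x y with h1 | h1 | h1
  · exact div_nonneg (sub_nonneg.2 (hf h1.le)) (sub_nonneg.2 h1.le)
  · simp [h1]
  · exact div_nonneg_iff.2 (Or.inr ⟨(sub_nonpos.2 (hf h1.le)), (sub_nonpos.2 h1.le)⟩)
lemma ae_hasDerivAt_primitive {f : ℝ → ℝ} {M : ℝ} (hmeas : Measurable f) (hbdd : ∀ t, |f t| ≤ M) :
    ∀ᵐ x ∂(volume : Measure ℝ), HasDerivAt (fun y => ∫ τ in (0:ℝ)..y, f τ) (f x) x := by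
  have hint : ∀ a b : ℝ, IntervalIntegrable f volume a b := bdd_intervalIntegrable hmeas hbdd
  have hloc : LocallyIntegrable f volume := by
    intro x
    exact ⟨closedBall x 1, closedBall_mem_nhds x one_pos,
      Measure.integrableOn_of_bounded measure_closedBall_lt_top.ne
        hmeas.aestronglyMeasurable (ae_of_all _ fun y => by simpa using hbdd y)⟩
  filter_upwards [IsUnifLocDoublingMeasure.ae_tendsto_average_norm_sub volume hloc 1] with x hx
  have key : Tendsto (fun y : ℝ => ⨍ z in closedBall x (|y - x|), ‖f z - f x‖) (𝓝[≠] x) (𝓝 0) := by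
    apply hx (fun _ => x) (fun y => |y - x|)
    · apply tendsto_nhdsWithin_of_tendsto_nhds_of_eventually_within
      · have h0 : Tendsto (fun y : ℝ => |y - x|) (𝓝 x) (𝓝 0) := by
          have := (((continuous_id : Continuous (id : ℝ → ℝ)).sub
            (continuous_const : Continuous fun _ : ℝ => x)).abs.tendsto x)
          simpa using this
        exact h0.mono_left nhdsWithin_le_nhds
      · filter_upwards [self_mem_nhdsWithin] with y hy
        have : y ≠ x := Set.mem_compl_singleton_iff.mp hy
        simpa [abs_pos, sub_ne_zero] using this
    · filter_upwards with y
      simp [mem_closedBall, abs_nonneg]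
  rw [hasDerivAt_iff_tendsto_slope, ← tendsto_sub_nhds_zero_iff]
  have key2 : Tendsto (fun y : ℝ => 2 * ⨍ z in closedBall x (|y - x|), ‖f z - f x‖) (𝓝[≠] x) (𝓝 0) := by
    simpa using key.const_mul 2
  apply squeeze_zero_norm' ?_ key2
  filter_upwards [self_mem_nhdsWithin] with y hy
  have hxy : y ≠ x := Set.mem_compl_singleton_iff.mp hy
  have hyx : (0:ℝ) < |y - x| := abs_pos.2 (sub_ne_zero.2 hxy)
  have hHsub : (∫ τ in (0:ℝ)..y, f τ) - ∫ τ in (0:ℝ)..x, f τ = ∫ τ in x..y, f τ :=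
    intervalIntegral.integral_interval_sub_left (hint 0 y) (hint 0 x)
  have heq : slope (fun y => ∫ τ in (0:ℝ)..y, f τ) x y - f x
      = (∫ τ in x..y, (f τ - f x)) / (y - x) := by
    rw [slope_def_field, hHsub,
      intervalIntegral.integral_sub (hint x y) intervalIntegrable_const,
      intervalIntegral.integral_const]
    have : (y - x) ≠ 0 := sub_ne_zero.2 hxy
    field_simp
    rw [smul_eq_mul]
  have hball_int : IntegrableOn (fun z => ‖f z - f x‖) (closedBall x (|y - x|)) volume := by
    apply Measure.integrableOn_of_bounded (M := M + |f x|) measure_closedBall_lt_top.ne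
    · exact ((hmeas.sub measurable_const).norm).aestronglyMeasurable
    · refine ae_of_all _ fun z => ?_
      have := abs_sub (f z) (f x)
      simp only [Real.norm_eq_abs, abs_abs]
      calc |f z - f x| ≤ |f z| + |f x| := abs_sub _ _
        _ ≤ M + |f x| := by have := hbdd z; linarith
  have hsub : Set.uIoc x y ⊆ closedBall x (|y - x|) := by
    intro z hz
    rw [Set.mem_uIoc] at hz
    rw [mem_closedBall, Real.dist_eq, abs_le]
    rcases hz with ⟨h1, h2⟩ | ⟨h1, h2⟩ <;>
      constructor <;> nlinarith [le_abs_self (y - x), neg_abs_le (y - x)]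
  have h1 : ‖∫ τ in x..y, (f τ - f x)‖ ≤ ∫ z in Set.uIoc x y, ‖f z - f x‖ :=
    intervalIntegral.norm_integral_le_integral_norm_uIoc
  have h2 : ∫ z in Set.uIoc x y, ‖f z - f x‖ ≤ ∫ z in closedBall x (|y - x|), ‖f z - f x‖ := by
    apply setIntegral_mono_set hball_int (ae_of_all _ fun z => norm_nonneg _)
      (HasSubset.Subset.eventuallyLE hsub)
  have h3 : ∫ z in closedBall x (|y - x|), ‖f z - f x‖
      = (2 * |y - x|) * ⨍ z in closedBall x (|y - x|), ‖f z - f x‖ := by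
    rw [setAverage_eq, smul_eq_mul, Real.volume_real_closedBall (by positivity)]
    rw [← mul_assoc, mul_inv_cancel₀ (by positivity), one_mul]
  rw [heq, norm_div, Real.norm_eq_abs (y - x), div_le_iff₀ hyx]
  calc ‖∫ τ in x..y, f τ - f x‖
      ≤ ∫ z in closedBall x (|y - x|), ‖f z - f x‖ := le_trans h1 h2
    _ = (2 * |y - x|) * ⨍ z in closedBall x (|y - x|), ‖f z - f x‖ := h3
    _ = (2 * ⨍ z in closedBall x (|y - x|), ‖f z - f x‖) * |y - x| := by ring

lemma abs_intervalIntegral_le_of_ae_deriv {B B' : ℝ → ℝ} {K : NNReal} {C : ℝ}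
    (hd : ∀ᵐ x ∂(volume : Measure ℝ), HasDerivAt B (B' x) x)
    (hlip : LipschitzWith K B) (hC : ∀ x, |B x| ≤ C) (a b : ℝ)
    (hmeasB' : AEStronglyMeasurable B' ((volume : Measure ℝ).restrict (Set.uIoc a b))) :
    |∫ x in a..b, B' x| ≤ 2 * C := by
  have hBc : Continuous B := hlip.continuous
  have hBint : ∀ c d : ℝ, IntervalIntegrable B volume c d := fun c d =>
    (hBc.intervalIntegrable c d)
  set F : ℕ → ℝ → ℝ := fun n x => (B (x + 1/(n+1)) - B x) * (n+1) with hF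
  have hnpos : ∀ n : ℕ, (0:ℝ) < 1/(n+1) := fun n => by positivity
  have htend : Tendsto (fun n => ∫ x in a..b, F n x) atTop (𝓝 (∫ x in a..b, B' x)) := by
    apply intervalIntegral.tendsto_integral_filter_of_dominated_convergence (fun _ => (K:ℝ))
    · filter_upwards with n
      exact (((hBc.comp (continuous_id.add continuous_const)).sub hBc).mul
        continuous_const).aestronglyMeasurable.restrict
    · filter_upwards with n
      filter_upwards with x _
      have h1 := hlip.dist_le_mul (x + 1/(n+1)) x
      rw [Real.dist_eq, Real.dist_eq] at h1
      have h2 : |x + 1/(n+1) - x| = 1/(n+1) := by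
        rw [add_sub_cancel_left, abs_of_pos (hnpos n)]
      rw [h2] at h1
      have : ‖F n x‖ = |B (x + 1/(n+1)) - B x| * (n+1) := by
        rw [hF]; rw [Real.norm_eq_abs, abs_mul, abs_of_pos (by positivity : (0:ℝ) < (n:ℝ)+1)]
      rw [this]
      calc |B (x + 1/(n+1)) - B x| * (n+1) ≤ ((K:ℝ) * (1/(n+1))) * (n+1) := by
            apply mul_le_mul_of_nonneg_right h1 (by positivity)
        _ = (K:ℝ) := by field_simp
    · exact intervalIntegrable_const
    · filter_upwards [hd] with x hx _
      have : Tendsto (fun n : ℕ => x + 1/(n+1)) atTop (𝓝[≠] x) := by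
        apply tendsto_nhdsWithin_of_tendsto_nhds_of_eventually_within
        · have h0 : Tendsto (fun n : ℕ => 1/((n:ℝ)+1)) atTop (𝓝 0) :=
            tendsto_one_div_add_atTop_nhds_zero_nat
          have := h0.const_add x
          simpa using this
        · filter_upwards with n
          simp only [Set.mem_compl_singleton_iff]
          have := hnpos n; intro hcon; nlinarith [hnpos n]
      have hslope := (hasDerivAt_iff_tendsto_slope.1 hx).comp this
      have : ∀ n : ℕ, slope B x (x + 1/(n+1)) = F n x := by
        intro n
        rw [slope_def_field, hF]
        simp only [add_sub_cancel_left]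
        rw [div_eq_mul_inv, one_div, inv_inv]
      exact Tendsto.congr (fun n => this n) hslope
  have hbound : ∀ n : ℕ, |∫ x in a..b, F n x| ≤ 2 * C := by
    intro n
    set h : ℝ := 1/(n+1) with hh
    have hint : ∫ x in a..b, F n x
        = ((∫ x in a+h..b+h, B x) - ∫ x in a..b, B x) * (n+1) := by
      have heqF : (fun x => F n x) = fun x => (B (x + h) - B x) * ((n:ℝ)+1) := rfl
      rw [heqF, intervalIntegral.integral_mul_const,
        intervalIntegral.integral_sub (Continuous.intervalIntegrable (by fun_prop) a b) (hBint a b),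
        intervalIntegral.integral_comp_add_right B h]
    have hcomm : (∫ x in a+h..b+h, B x) - ∫ x in a..b, B x
        = (∫ x in a+h..a, B x) - ∫ x in b+h..b, B x :=
      intervalIntegral.integral_interval_sub_interval_comm (hBint _ _) (hBint _ _) (hBint _ _)
    have hsmall : ∀ c : ℝ, |∫ x in c+h..c, B x| ≤ C * h := by
      intro c
      have := intervalIntegral.norm_integral_le_of_norm_le_const
        (C := C) (f := B) (a := c+h) (b := c) (fun x _ => by simpa using hC x)
      simpa [hh, abs_of_pos (hnpos n), abs_of_pos (show (0:ℝ) < ((n:ℝ)+1)⁻¹ by positivity), one_div] using this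
    rw [hint, hcomm, abs_mul, abs_of_pos (by positivity : (0:ℝ) < (n:ℝ)+1)]
    have : |(∫ x in a+h..a, B x) - ∫ x in b+h..b, B x| ≤ C * h + C * h :=
      (abs_sub _ _).trans (add_le_add (hsmall a) (hsmall b))
    calc |(∫ x in a+h..a, B x) - ∫ x in b+h..b, B x| * ((n:ℝ)+1)
        ≤ (C * h + C * h) * ((n:ℝ)+1) := by
          apply mul_le_mul_of_nonneg_right this (by positivity)
      _ = 2 * C := by rw [hh]; field_simp; ring
  exact le_of_tendsto htend.abs (Eventually.of_forall hbound)

lemma fekete_real {I : ℝ → ℝ} {M : ℝ} (hM : 0 ≤ M)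
    (hbd : ∀ t, 0 < t → |I t| ≤ M * t)
    (hsuper : ∀ t1 t2, 0 < t1 → 0 < t2 → I t1 + I t2 ≤ I (t1 + t2)) :
    Tendsto (fun t => I t / t) atTop
      (𝓝 (sSup {x : ℝ | ∃ t : ℝ, 0 < t ∧ x = I t / t})) := by
  set S := {x : ℝ | ∃ t : ℝ, 0 < t ∧ x = I t / t} with hS
  have hSne : S.Nonempty := ⟨I 1 / 1, 1, one_pos, rfl⟩
  have hSbdd : BddAbove S := by
    refine ⟨M, fun x hx => ?_⟩
    obtain ⟨t, ht, rfl⟩ := hx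
    rw [div_le_iff₀ ht]
    exact (le_abs_self _).trans (hbd t ht)
  set L := sSup S with hL
  have hle : ∀ t, 0 < t → I t / t ≤ L := fun t ht => le_csSup hSbdd ⟨t, ht, rfl⟩
  have claim : ∀ n : ℕ, ∀ T r : ℝ, 0 < T → 0 < r →
      (n : ℝ) * I T + I r ≤ I ((n : ℝ) * T + r) := by
    intro n
    induction n with
    | zero => intro T r _ _; simp
    | succ k ih =>
      intro T r hT hr
      have hpos : 0 < (k : ℝ) * T + r :=
        add_pos_of_nonneg_of_pos (by positivity) hr
      have h1 : ((k + 1 : ℕ) : ℝ) * T + r = T + ((k : ℝ) * T + r) := by push_cast; ring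
      calc ((k + 1 : ℕ) : ℝ) * I T + I r = I T + ((k : ℝ) * I T + I r) := by push_cast; ring
        _ ≤ I T + I ((k : ℝ) * T + r) := by linarith [ih T r hT hr]
        _ ≤ I (T + ((k : ℝ) * T + r)) := hsuper _ _ hT hpos
        _ = I (((k + 1 : ℕ) : ℝ) * T + r) := by rw [h1]
  rw [Metric.tendsto_atTop]
  intro ε hε
  obtain ⟨x, hxS, hx⟩ := exists_lt_of_lt_csSup hSne (show L - ε/2 < L by linarith)
  obtain ⟨T, hT, rfl⟩ := hxS
  refine ⟨max (2 * T) (8 * T * M / ε + 1), fun t ht => ?_⟩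
  have ht1 : 2 * T ≤ t := le_trans (le_max_left _ _) ht
  have ht2 : 8 * T * M / ε + 1 ≤ t := le_trans (le_max_right _ _) ht
  have htpos : 0 < t := lt_of_lt_of_le (by positivity) ht1
  -- choose n and r
  set n : ℕ := ⌊t / T⌋₊ - 1 with hn
  have hfl2 : 2 ≤ ⌊t / T⌋₊ := by
    rw [Nat.le_floor_iff (by positivity)]
    rw [le_div_iff₀ hT]; push_cast; linarith
  have hncast : (n : ℝ) = (⌊t / T⌋₊ : ℝ) - 1 := by
    rw [hn, Nat.cast_sub (by omega)]; simp
  have hfl_le : (⌊t / T⌋₊ : ℝ) ≤ t / T := Nat.floor_le (by positivity)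
  have hfl_gt : t / T < (⌊t / T⌋₊ : ℝ) + 1 := Nat.lt_floor_add_one _
  set r : ℝ := t - (n : ℝ) * T with hr
  have hrT : T ≤ r := by
    rw [hr, hncast]
    have : ((⌊t / T⌋₊ : ℝ)) * T ≤ t := by
      rw [← le_div_iff₀ hT]; exact hfl_le
    nlinarith
  have hr2T : r < 2 * T := by
    rw [hr, hncast]
    have : t < ((⌊t / T⌋₊ : ℝ) + 1) * T := by
      rw [← div_lt_iff₀ hT]; exact hfl_gt
    nlinarith
  have hrpos : 0 < r := lt_of_lt_of_le hT hrT
  have hkey : (n : ℝ) * I T + I r ≤ I t := by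
    have := claim n T r hT hrpos
    have hnTr : (n : ℝ) * T + r = t := by rw [hr]; ring
    rwa [hnTr] at this
  set q : ℝ := I T / T with hq
  have hqM : |q| ≤ M := by
    rw [hq, abs_div, abs_of_pos hT, div_le_iff₀ hT]
    exact hbd T hT
  have hIT : I T = q * T := by rw [hq]; field_simp
  have hIr : -(M * r) ≤ I r := neg_le_of_abs_le (hbd r hrpos)
  have hnT : (n : ℝ) * T = t - r := by rw [hr]; ring
  have hlow : t * q - 4 * T * M ≤ I t := by
    have h1 : (n : ℝ) * I T = (t - r) * q := by rw [← hnT, hIT]; ring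
    have h2 : r * q ≤ r * |q| := mul_le_mul_of_nonneg_left (le_abs_self q) hrpos.le
    have h3 : r * |q| ≤ (2 * T) * M :=
      mul_le_mul hr2T.le hqM (abs_nonneg q) (by positivity)
    have h4 : M * r ≤ M * (2 * T) := mul_le_mul_of_nonneg_left hr2T.le hM
    nlinarith
  have hdiv : q - 4 * T * M / t ≤ I t / t := by
    have h5 := (div_le_div_iff_of_pos_right htpos).2 hlow
    have h6 : (t * q - 4 * T * M) / t = q - 4 * T * M / t := by
      field_simp
    rwa [h6] at h5
  have hε4 : 4 * T * M / t ≤ ε / 2 := by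
    have h7 : 8 * T * M / ε ≤ t := by linarith
    rw [div_le_iff₀ hε] at h7
    rw [div_le_iff₀ htpos]
    nlinarith
  have hgt : L - ε < I t / t := by linarith
  have hle' := hle t htpos
  rw [Real.dist_eq, abs_sub_lt_iff]
  constructor <;> linarith

lemma ciInf_div_const {f : ℝ → ℝ} {t : ℝ} (hb : BddBelow (Set.range f)) (ht : 0 < t) :
    ⨅ s, f s / t = (⨅ s, f s) / t := by
  obtain ⟨b, hbb⟩ := hb
  have hb' : BddBelow (Set.range fun s => f s / t) := by
    refine ⟨b / t, ?_⟩
    rintro _ ⟨s, rfl⟩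
    have h := hbb ⟨s, rfl⟩
    have := mul_le_mul_of_nonneg_right h (inv_nonneg.2 ht.le)
    simpa [div_eq_mul_inv] using this
  apply le_antisymm
  · rw [le_div_iff₀ ht]
    apply le_ciInf fun s => ?_
    have h1 : (⨅ s, f s / t) ≤ f s / t := ciInf_le hb' s
    calc (⨅ s, f s / t) * t ≤ (f s / t) * t := mul_le_mul_of_nonneg_right h1 ht.le
      _ = f s := div_mul_cancel₀ _ (ne_of_gt ht)
  · apply le_ciInf fun s => ?_
    gcongr
    exact ciInf_le ⟨b, hbb⟩ s

/-- For `g ∈ L^∞(ℝ)`, the least mean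
`⟨g⟩ = lim_{t→+∞} inf_{s} (1/t)∫_s^{s+t} g` exists and equals
`sup_{B ∈ W^{1,∞}(ℝ)} essinf_ℝ (g + B')`. -/
theorem least_mean_characterization
    (g : ℝ → ℝ) (hmeas : Measurable g) (hbdd : ∃ M : ℝ, ∀ t : ℝ, |g t| ≤ M) :
    ∃ L : ℝ,
      Tendsto (fun t : ℝ => ⨅ s : ℝ, (∫ τ in s..(s + t), g τ) / t) atTop (nhds L) ∧
      L = sSup {m : ℝ | ∃ (B B' : ℝ → ℝ),
          (∀ᵐ x ∂(volume : Measure ℝ), HasDerivAt B (B' x) x) ∧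
          (∃ K : NNReal, LipschitzWith K B) ∧
          (∃ M : ℝ, ∀ x : ℝ, |B x| ≤ M) ∧
          (∃ M : ℝ, ∀ x : ℝ, |B' x| ≤ M) ∧
          m = essInf (fun x => g x + B' x) volume} := by
  obtain ⟨M, hM⟩ := hbdd
  have hM0 : 0 ≤ M := le_trans (abs_nonneg _) (hM 0)
  have hgint : ∀ a b : ℝ, IntervalIntegrable g volume a b := bdd_intervalIntegrable hmeas hM
  set I : ℝ → ℝ := fun t => ⨅ s : ℝ, ∫ τ in s..(s + t), g τ with hIdef
  have hIptbd : ∀ t : ℝ, 0 < t → ∀ s : ℝ, |∫ τ in s..(s + t), g τ| ≤ M * t := by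
    intro t ht s
    have := intervalIntegral.norm_integral_le_of_norm_le_const
      (C := M) (f := g) (a := s) (b := s + t) (fun x _ => by simpa using hM x)
    simpa [abs_of_pos ht] using this
  have hbdb : ∀ t : ℝ, 0 < t → BddBelow (Set.range fun s : ℝ => ∫ τ in s..(s + t), g τ) := by
    intro t ht
    refine ⟨-(M * t), ?_⟩
    rintro _ ⟨s, rfl⟩
    exact neg_le_of_neg_le (by linarith [abs_le.1 (hIptbd t ht s) |>.1])
  have hIbd : ∀ t : ℝ, 0 < t → |I t| ≤ M * t := by
    intro t ht
    rw [abs_le]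
    constructor
    · apply le_ciInf fun s => ?_
      linarith [(abs_le.1 (hIptbd t ht s)).1]
    · exact le_trans (ciInf_le (hbdb t ht) 0) (abs_le.1 (hIptbd t ht 0)).2
  have hIle : ∀ t : ℝ, 0 < t → ∀ s : ℝ, I t ≤ ∫ τ in s..(s + t), g τ :=
    fun t ht s => ciInf_le (hbdb t ht) s
  have hsuper : ∀ t1 t2 : ℝ, 0 < t1 → 0 < t2 → I t1 + I t2 ≤ I (t1 + t2) := by
    intro t1 t2 h1 h2
    apply le_ciInf fun s => ?_
    have hadj : (∫ τ in s..(s + t1), g τ) + ∫ τ in (s + t1)..((s + t1) + t2), g τ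
        = ∫ τ in s..(s + (t1 + t2)), g τ := by
      rw [show s + (t1 + t2) = (s + t1) + t2 by ring]
      exact intervalIntegral.integral_add_adjacent_intervals (hgint _ _) (hgint _ _)
    have k1 := hIle t1 h1 s
    have k2 := hIle t2 h2 (s + t1)
    linarith
  set L : ℝ := sSup {x : ℝ | ∃ t : ℝ, 0 < t ∧ x = I t / t} with hLdef
  have htendI : Tendsto (fun t => I t / t) atTop (𝓝 L) := fekete_real hM0 hIbd hsuper
  have htend : Tendsto (fun t : ℝ => ⨅ s : ℝ, (∫ τ in s..(s + t), g τ) / t) atTop (𝓝 L) := by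
    apply htendI.congr'
    filter_upwards [eventually_ge_atTop (1:ℝ)] with t ht
    exact (ciInf_div_const (hbdb t (by linarith)) (by linarith)).symm
  set S' := {m : ℝ | ∃ (B B' : ℝ → ℝ),
      (∀ᵐ x ∂(volume : Measure ℝ), HasDerivAt B (B' x) x) ∧
      (∃ K : NNReal, LipschitzWith K B) ∧
      (∃ M : ℝ, ∀ x : ℝ, |B x| ≤ M) ∧
      (∃ M : ℝ, ∀ x : ℝ, |B' x| ≤ M) ∧
      m = essInf (fun x => g x + B' x) volume} with hS'def
  -- Direction 1 : every element of S' is ≤ L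
  have dir1 : ∀ m ∈ S', m ≤ L := by
    rintro m ⟨B, B', hdAe, ⟨K, hlip⟩, ⟨CB, hCB⟩, ⟨MB', hMB'⟩, rfl⟩
    have hCB0 : 0 ≤ CB := le_trans (abs_nonneg _) (hCB 0)
    have hB'ae : B' =ᵐ[volume] deriv B := by
      filter_upwards [hdAe] with x hx using (hx.deriv).symm
    have hB'sm : AEStronglyMeasurable B' (volume : Measure ℝ) :=
      ((measurable_deriv B).aestronglyMeasurable).congr hB'ae.symm
    have hB'int : ∀ a b : ℝ, IntervalIntegrable B' volume a b := by
      intro a b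
      rw [intervalIntegrable_iff]
      exact Measure.integrableOn_of_bounded measure_Ioc_lt_top.ne hB'sm
        (ae_of_all _ fun x => by simpa using hMB' x)
    have hφint : ∀ a b : ℝ, IntervalIntegrable (fun x => g x + B' x) volume a b :=
      fun a b => (hgint a b).add (hB'int a b)
    set m := essInf (fun x => g x + B' x) volume with hmdef
    have hmle : ∀ᵐ x ∂(volume : Measure ℝ), m ≤ g x + B' x := by
      apply ae_essInf_le
      exact isBoundedUnder_of ⟨-(M + MB'), fun x => by
        have := hM x; have := hMB' x
        simp only [ge_iff_le]
        have h1 := (abs_le.1 (hM x)).1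
        have h2 := (abs_le.1 (hMB' x)).1
        linarith⟩
    have key : ∀ t : ℝ, 0 < t → m - 2 * CB / t ≤ I t / t := by
      intro t ht
      have hIget : m * t - 2 * CB ≤ I t := by
        apply le_ciInf fun s => ?_
        have hsplit : (∫ τ in s..(s + t), g τ)
            = (∫ τ in s..(s + t), (g τ + B' τ)) - ∫ τ in s..(s + t), B' τ := by
          rw [← intervalIntegral.integral_sub (hφint s (s+t)) (hB'int s (s+t))]
          apply intervalIntegral.integral_congr
          intro x _; ring
        have hφge : m * t ≤ ∫ τ in s..(s + t), (g τ + B' τ) := by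
          have := intervalIntegral.integral_mono_ae (μ := volume) (a := s) (b := s + t)
            (f := fun _ => m) (g := fun x => g x + B' x)
            (by linarith) intervalIntegrable_const (hφint s (s+t)) hmle
          simpa [intervalIntegral.integral_const, smul_eq_mul, mul_comm] using this
        have hB'small : |∫ τ in s..(s + t), B' τ| ≤ 2 * CB :=
          abs_intervalIntegral_le_of_ae_deriv hdAe hlip hCB s (s + t) hB'sm.restrict
        have := (abs_le.1 hB'small).2
        linarith
      have h5 := mul_le_mul_of_nonneg_right hIget (inv_nonneg.2 ht.le)
      have h6 : (m * t - 2 * CB) * t⁻¹ = m - 2 * CB / t := by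
        field_simp
      rw [h6] at h5
      simpa [div_eq_mul_inv] using h5
    have htendm : Tendsto (fun t : ℝ => m - 2 * CB / t) atTop (𝓝 m) := by
      have h0 : Tendsto (fun t : ℝ => 2 * CB / t) atTop (𝓝 0) :=
        tendsto_const_nhds.div_atTop tendsto_id
      have h1 := (tendsto_const_nhds (x := m) (f := atTop (α := ℝ))).sub h0
      simpa using h1
    apply le_of_tendsto_of_tendsto htendm htendI
    filter_upwards [eventually_ge_atTop (1:ℝ)] with t ht
    exact key t (by linarith)
  -- S' is nonempty
  have hS'ne : S'.Nonempty := by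
    refine ⟨essInf (fun x => g x + (fun _ : ℝ => (0:ℝ)) x) volume,
      (fun _ => 0), (fun _ => 0), ?_, ⟨0, ?_⟩, ⟨0, by simp⟩, ⟨0, by simp⟩, rfl⟩
    · exact ae_of_all _ fun x => hasDerivAt_const x 0
    · exact LipschitzWith.const' 0
  have hS'bdd : BddAbove S' := ⟨L, fun m hm => dir1 m hm⟩
  have dir2 : ∀ ε : ℝ, 0 < ε → L - ε ≤ sSup S' := by
    intro ε hε
    obtain ⟨N, hN⟩ := (Metric.tendsto_atTop.1 htendI) (ε/2) (by linarith)
    set T1 : ℝ := max N 1 with hT1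
    have hT1pos : (0:ℝ) < T1 := lt_of_lt_of_le one_pos (le_max_right _ _)
    have hlowI : ∀ t : ℝ, T1 ≤ t → (L - ε/2) * t ≤ I t := by
      intro t ht
      have htpos : 0 < t := lt_of_lt_of_le hT1pos ht
      have hd := hN t (le_trans (le_max_left _ _) ht)
      rw [Real.dist_eq, abs_sub_lt_iff] at hd
      have h1 : L - ε/2 < I t / t := by linarith [hd.2]
      calc (L - ε/2) * t ≤ (I t / t) * t := mul_le_mul_of_nonneg_right h1.le htpos.le
        _ = I t := div_mul_cancel₀ _ (ne_of_gt htpos)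
    set lε : ℝ := L - ε with hlε
    set h : ℝ → ℝ := fun x => g x - lε with hhdef
    have hhmeas : Measurable h := hmeas.sub measurable_const
    set M' : ℝ := M + |lε| with hM'def
    have hM'0 : 0 ≤ M' := by rw [hM'def]; exact add_nonneg hM0 (abs_nonneg _)
    have hhbd : ∀ x, |h x| ≤ M' := fun x =>
      (abs_sub _ _).trans (add_le_add (hM x) le_rfl)
    have hhint : ∀ a b : ℝ, IntervalIntegrable h volume a b := bdd_intervalIntegrable hhmeas hhbd
    set H : ℝ → ℝ := fun y => ∫ τ in (0:ℝ)..y, h τ with hHdef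
    have hHsub : ∀ a b : ℝ, H b - H a = ∫ τ in a..b, h τ := fun a b =>
      intervalIntegral.integral_interval_sub_left (hhint 0 b) (hhint 0 a)
    have hHdist : ∀ a b : ℝ, |H b - H a| ≤ M' * |b - a| := by
      intro a b
      rw [hHsub]
      have := intervalIntegral.norm_integral_le_of_norm_le_const (C := M') (f := h)
        (a := a) (b := b) (fun x _ => by simpa using hhbd x)
      simpa [abs_sub_comm] using this
    set c : ℝ := M' * T1 with hcdef
    have hc0 : 0 ≤ c := by rw [hcdef]; exact mul_nonneg hM'0 hT1pos.le
    have hkey : ∀ y x : ℝ, y ≤ x → -c ≤ H x - H y := by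
      intro y x hyx
      rcases le_or_gt T1 (x - y) with hcase | hcase
      · have hxypos : 0 < x - y := lt_of_lt_of_le hT1pos hcase
        have hIg : I (x - y) ≤ ∫ τ in y..x, g τ := by
          have := hIle (x - y) hxypos y
          rwa [show y + (x - y) = x by ring] at this
        have hsplit : ∫ τ in y..x, h τ = (∫ τ in y..x, g τ) - lε * (x - y) := by
          rw [hhdef]
          rw [intervalIntegral.integral_sub (hgint y x) intervalIntegrable_const,
            intervalIntegral.integral_const, smul_eq_mul]
          ring
        have hIlow := hlowI (x - y) hcase
        rw [hHsub, hsplit, hlε]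
        nlinarith [hIg, hIlow]
      · have habs : |x - y| ≤ T1 := by rw [abs_of_nonneg (by linarith)]; linarith
        have h3 : M' * |x - y| ≤ c := by rw [hcdef]; exact mul_le_mul_of_nonneg_left habs hM'0
        have h2 := (abs_le.1 (hHdist y x)).1
        linarith
    set C : ℝ → ℝ := fun x => sSup (H '' Iic x) with hCdef
    have hCbddA : ∀ x : ℝ, BddAbove (H '' Iic x) := by
      intro x
      refine ⟨H x + c, ?_⟩
      rintro _ ⟨y, hy, rfl⟩
      have := hkey y x hy
      linarith
    have hCne : ∀ x : ℝ, (H '' Iic x).Nonempty := fun x => ⟨H x, x, self_mem_Iic, rfl⟩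
    have hCge : ∀ x : ℝ, H x ≤ C x := fun x => le_csSup (hCbddA x) ⟨x, self_mem_Iic, rfl⟩
    have hCle : ∀ x : ℝ, C x ≤ H x + c := by
      intro x
      apply csSup_le (hCne x)
      rintro _ ⟨y, hy, rfl⟩
      have := hkey y x hy
      linarith
    have hCmono : Monotone C := by
      intro a b hab
      exact csSup_le_csSup (hCbddA b) (hCne a) (Set.image_mono (Iic_subset_Iic.2 hab))
    have hClipub : ∀ a b : ℝ, a ≤ b → C b ≤ C a + M' * (b - a) := by
      intro a b hab
      apply csSup_le (hCne b)
      rintro _ ⟨y, hy, rfl⟩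
      rcases le_total y a with hya | hya
      · have h4 : H y ≤ C a := le_csSup (hCbddA a) ⟨y, hya, rfl⟩
        nlinarith [mul_nonneg hM'0 (sub_nonneg.2 hab)]
      · have h1 : H y - H a ≤ M' * (y - a) := by
          have h5 := (abs_le.1 (hHdist a y)).2
          rwa [abs_of_nonneg (by linarith : (0:ℝ) ≤ y - a)] at h5
        have hyb : y ≤ b := hy
        have h2 : M' * (y - a) ≤ M' * (b - a) :=
          mul_le_mul_of_nonneg_left (by linarith) hM'0
        have := hCge a
        linarith
    have hCdist : ∀ a b : ℝ, |C b - C a| ≤ M' * |b - a| := by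
      intro a b
      rcases le_total a b with hab | hab
      · rw [abs_of_nonneg (sub_nonneg.2 (hCmono hab)), abs_of_nonneg (sub_nonneg.2 hab)]
        linarith [hClipub a b hab]
      · rw [abs_of_nonpos (sub_nonpos.2 (hCmono hab)), abs_of_nonpos (sub_nonpos.2 hab)]
        linarith [hClipub b a hab]
    set B : ℝ → ℝ := fun x => C x - H x with hBdef
    have hBbd : ∀ x : ℝ, |B x| ≤ c := by
      intro x
      simp only [hBdef]
      rw [abs_le]
      exact ⟨by linarith [hCge x], by linarith [hCle x]⟩
    have hBlipd : ∀ a b : ℝ, |B b - B a| ≤ (2 * M') * |b - a| := by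
      intro a b
      have h1 := hCdist a b
      have h2 := hHdist a b
      have h3 : B b - B a = (C b - C a) - (H b - H a) := by simp only [hBdef]; ring
      rw [h3]
      calc |(C b - C a) - (H b - H a)| ≤ |C b - C a| + |H b - H a| := abs_sub _ _
        _ ≤ 2 * M' * |b - a| := by linarith
    have hBlip : LipschitzWith (2 * M').toNNReal B := by
      apply LipschitzWith.of_dist_le_mul
      intro a b
      rw [Real.dist_eq, Real.dist_eq, Real.coe_toNNReal _ (by linarith : (0:ℝ) ≤ 2 * M')]
      exact hBlipd b a
    have hBdiff : ∀ᵐ x ∂(volume : Measure ℝ), HasDerivAt B (deriv B x) x := by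
      filter_upwards [hBlip.ae_differentiableAt] with x hx using hx.hasDerivAt
    have hB'bd : ∀ x : ℝ, |deriv B x| ≤ 2 * M' := by
      intro x
      by_cases hx : DifferentiableAt ℝ B x
      · have h6 := abs_le_of_hasDerivAt_lipschitz hBlip hx.hasDerivAt
        calc |deriv B x| ≤ ((2 * M').toNNReal : ℝ) := h6
          _ = 2 * M' := Real.coe_toNNReal _ (by linarith)
      · rw [deriv_zero_of_not_differentiableAt hx]
        rw [abs_zero]
        linarith
    have hHderiv : ∀ᵐ x ∂(volume : Measure ℝ), HasDerivAt H (h x) x := by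
      rw [hHdef]
      exact ae_hasDerivAt_primitive hhmeas hhbd
    have hnng : ∀ᵐ x ∂(volume : Measure ℝ), L - ε ≤ g x + deriv B x := by
      filter_upwards [hBdiff, hHderiv] with x hB hH
      have hCd : HasDerivAt C (deriv B x + h x) x := by
        have hadd := hB.add hH
        have hfun : (fun y => B y + H y) = C := by
          funext y; simp only [hBdef]; ring
        rwa [show B + H = C from hfun] at hadd
      have h7 := nonneg_of_hasDerivAt_monotone hCmono hCd
      simp only [hhdef, hlε] at h7
      linarith
    set m : ℝ := essInf (fun x => g x + deriv B x) volume with hmdef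
    have hmge : L - ε ≤ m := by
      rw [hmdef, essInf]
      apply le_liminf_of_le
      · apply Filter.IsBoundedUnder.isCoboundedUnder_ge
        exact isBoundedUnder_of ⟨M + 2 * M', fun x => by
          have := (abs_le.1 (hM x)).2
          have := (abs_le.1 (hB'bd x)).2
          linarith⟩
      · exact hnng
    have hmem : m ∈ S' := by
      rw [hS'def]
      exact ⟨B, deriv B, hBdiff, ⟨(2 * M').toNNReal, hBlip⟩, ⟨c, hBbd⟩, ⟨2 * M', hB'bd⟩, hmdef⟩
    exact le_trans hmge (le_csSup hS'bdd hmem)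
  refine ⟨L, htend, le_antisymm ?_ (csSup_le hS'ne dir1)⟩
  exact le_of_forall_sub_le dir2
end
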